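/- arXiv:1609.09238 — 5 statements merged into one kernel-verified Lean document; each statement's English description precedes it below -/
import Mathlib

section
/- Suppose that Σ_{n≥1} n^{-2} Θ^4_{⌊e^n⌋} < ∞ and Σ_{n≥1} n^{-2} Δ^4_{⌊e^n⌋} < ∞. Then lim_{n→∞} n^{-1/2} ( K_{⌊e^n⌋} − Σ_{k≥1} 1{⌊e^n⌋ p_k ≥ 1} ) = 0 almost surely. -/
/-!
With `N = ⌊eⁿ⌋` and `L` the set of boxes with `N p_k ≥ 1`, the difference between the number of
occupied boxes and `#L` is at most the number of balls landing outside `L` plus the number of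
empty boxes in `L`. Both are counts `∑_{k} 1_{C_k}` of events whose joint probabilities are
dominated by products: `P(⋂_{k ∈ s} C_k) ≤ ∏_{k ∈ s} r_k`, with `r = P(N p_{B_j} < 1)` for the
independent balls and `r_k = e^{-N p_k}` for the empty boxes (since `(1 - ∑_s p)^N ≤ e^{-N ∑_s p}`).
Such a count has fourth moment at most `(∑ r + 4)^4`, i.e. `(Δ_N + 4)^4` and `(Θ_N + 4)^4`.
Markov's inequality at level `ε √n` and Borel–Cantelli then give the almost sure convergence.
-/

open MeasureTheory ProbabilityTheory Filter Set
open scoped ENNReal Topology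

lemma tsum_ite_one_eq_card {ι : Type*} {P : ι → Prop} [DecidablePred P] {s : Finset ι}
    (hs : ∀ k, P k ↔ k ∈ s) : ∑' k, (if P k then (1 : ℝ) else 0) = s.card := by
  rw [tsum_eq_sum (s := s) fun k hk => if_neg (by rwa [hs]), Finset.sum_ite_of_true
    fun k hk => (hs k).2 hk]
  simp

lemma abs_card_image_sub_card_le {α β : Type*} [DecidableEq β] (b : α → β) (J : Finset α)
    (L : Finset β) :
    |((J.image b).card : ℝ) - L.card| ≤
      (J.filter fun j => b j ∉ L).card + (L.filter fun k => ∀ j ∈ J, b j ≠ k).card := by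
  have h_occupied : (J.image b).card ≤ (J.filter fun j => b j ∉ L).card + L.card :=
    calc (J.image b).card ≤ (J.image b \ L).card + L.card := Finset.card_le_card_sdiff_add_card
      _ ≤ ((J.filter fun j => b j ∉ L).image b).card + L.card := by
        gcongr
        intro k
        simp only [Finset.mem_sdiff, Finset.mem_image, Finset.mem_filter]
        rintro ⟨⟨j, hj, rfl⟩, hk⟩
        exact ⟨j, ⟨hj, hk⟩, rfl⟩
      _ ≤ _ := by gcongr; exact Finset.card_image_le
  have h_large : L.card ≤ (L.filter fun k => ∀ j ∈ J, b j ≠ k).card + (J.image b).card :=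
    calc L.card ≤ (L \ J.image b).card + (J.image b).card := Finset.card_le_card_sdiff_add_card
      _ = _ := by congr 2; ext k; simp
  have h_occupied' : ((J.image b).card : ℝ) ≤ (J.filter fun j => b j ∉ L).card + L.card := by
    exact_mod_cast h_occupied
  have h_large' : (L.card : ℝ) ≤ (L.filter fun k => ∀ j ∈ J, b j ≠ k).card + (J.image b).card := by
    exact_mod_cast h_large
  rw [abs_le]
  constructor <;> linarith [(J.filter fun j => b j ∉ L).card.cast_nonneg (α := ℝ),
    (L.filter fun k => ∀ j ∈ J, b j ≠ k).card.cast_nonneg (α := ℝ)]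

lemma finite_setOf_one_le_mul {p : ℕ → ℝ} (hp : Summable p) (n : ℕ) :
    {k | 1 ≤ (n : ℝ) * p k}.Finite := by
  refine (hp.tendsto_cofinite_zero.eventually_lt_const
    (Nat.one_div_pos_of_nat (n := n))).subset fun k hk => ?_
  simp only [Set.mem_ofPred_eq, Set.mem_compl_iff, not_lt] at hk ⊢
  have hpk : 0 < p k := pos_of_mul_pos_right (one_pos.trans_le hk) n.cast_nonneg
  rw [div_le_iff₀ (by positivity)]
  linarith

section FourthMoment

variable {Ω ι : Type*} [MeasurableSpace Ω] {μ : Measure Ω}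

lemma sum_prod_insert_le [DecidableEq ι] (L s : Finset ι) (r : ι → ℝ≥0∞) :
    ∑ k ∈ L, ∏ i ∈ insert k s, r i ≤ (∑ k ∈ L, r k + s.card) * ∏ i ∈ s, r i := by
  have h_term : ∀ k, ∏ i ∈ insert k s, r i ≤ (r k + if k ∈ s then 1 else 0) * ∏ i ∈ s, r i := by
    intro k
    by_cases hk : k ∈ s
    · simp [hk, Finset.insert_eq_of_mem hk, add_mul]
    · simp [hk, Finset.prod_insert hk]
  calc ∑ k ∈ L, ∏ i ∈ insert k s, r i
      ≤ ∑ k ∈ L, (r k + if k ∈ s then 1 else 0) * ∏ i ∈ s, r i :=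
        Finset.sum_le_sum fun k _ => h_term k
    _ = (∑ k ∈ L, r k + (L ∩ s).card) * ∏ i ∈ s, r i := by
      rw [← Finset.sum_mul, Finset.sum_add_distrib, ← Finset.filter_mem_eq_inter,
        Finset.natCast_card_filter]
    _ ≤ _ := by gcongr; exact Finset.inter_subset_right

noncomputable def eventCount (L : Finset ι) (C : ι → Set Ω) (ω : Ω) : ℝ≥0∞ :=
  ∑ k ∈ L, (C k).indicator 1 ω

variable {L : Finset ι} {C : ι → Set Ω} {r : ι → ℝ≥0∞}

lemma measurable_eventCount (hC : ∀ k, MeasurableSet (C k)) : Measurable (eventCount L C) :=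
  Finset.measurable_sum _ fun k _ => measurable_one.indicator (hC k)

lemma lintegral_eventCount_pow_mul_indicator_le [DecidableEq ι] (hC : ∀ k, MeasurableSet (C k))
    (hr : ∀ s ⊆ L, μ (⋂ k ∈ s, C k) ≤ ∏ k ∈ s, r k) (d : ℕ) {s : Finset ι} (hs : s ⊆ L) :
    ∫⁻ ω, eventCount L C ω ^ d * (⋂ k ∈ s, C k).indicator 1 ω ∂μ
      ≤ (∑ k ∈ L, r k + s.card + d) ^ d * ∏ k ∈ s, r k := by
  -- With `C_s = ⋂_{k ∈ s} C k`, `eventCount · 1_{C_s} = ∑_{k ∈ L} 1_{C_{insert k s}}`: each new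
  -- index either repeats one of the `#s` events already in `s` or costs a factor `r k`.
  induction d generalizing s with
  | zero =>
    simpa [lintegral_indicator_one (Finset.measurableSet_biInter s fun k _ => hC k)] using hr s hs
  | succ d ih =>
    have h_split : ∀ ω, eventCount L C ω ^ (d + 1) * (⋂ k ∈ s, C k).indicator 1 ω
        = ∑ k ∈ L, eventCount L C ω ^ d * (⋂ i ∈ insert k s, C i).indicator 1 ω := by
      intro ω
      simp only [eventCount, Finset.set_biInter_insert, Set.inter_indicator_one, Pi.mul_apply,
        pow_succ, mul_assoc, ← Finset.mul_sum, Finset.sum_mul]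
    have h_meas : ∀ t : Finset ι, Measurable fun ω =>
        eventCount L C ω ^ d * (⋂ i ∈ t, C i).indicator 1 ω := fun t =>
      ((measurable_eventCount hC).pow_const d).mul
        (measurable_one.indicator (Finset.measurableSet_biInter t fun k _ => hC k))
    set m := ∑ k ∈ L, r k
    calc _ = ∑ k ∈ L, ∫⁻ ω, eventCount L C ω ^ d * (⋂ i ∈ insert k s, C i).indicator 1 ω ∂μ := by
          simp_rw [h_split]; exact lintegral_finsetSum _ fun k _ => h_meas _
      _ ≤ ∑ k ∈ L, (m + (insert k s).card + d) ^ d * ∏ i ∈ insert k s, r i :=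
          Finset.sum_le_sum fun k hk => ih (Finset.insert_subset hk hs)
      _ ≤ ∑ k ∈ L, (m + s.card + (d + 1 : ℕ)) ^ d * ∏ i ∈ insert k s, r i := by
          refine Finset.sum_le_sum fun k _ => ?_
          gcongr ?_ ^ d * _
          calc m + (insert k s).card + d ≤ m + (s.card + 1 : ℕ) + d := by
                gcongr; exact Finset.card_insert_le k s
            _ = _ := by push_cast; ring
      _ ≤ (m + s.card + (d + 1 : ℕ)) ^ d * ((m + s.card) * ∏ i ∈ s, r i) := by
          rw [← Finset.mul_sum]; gcongr; exact sum_prod_insert_le L s r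
      _ ≤ (m + s.card + (d + 1 : ℕ)) ^ (d + 1) * ∏ i ∈ s, r i := by
          rw [pow_succ, mul_assoc]; gcongr _ * (?_ * _); exact le_self_add

lemma lintegral_eventCount_pow_le [DecidableEq ι] (hC : ∀ k, MeasurableSet (C k))
    (hr : ∀ s ⊆ L, μ (⋂ k ∈ s, C k) ≤ ∏ k ∈ s, r k) (d : ℕ) :
    ∫⁻ ω, eventCount L C ω ^ d ∂μ ≤ (∑ k ∈ L, r k + d) ^ d := by
  simpa using lintegral_eventCount_pow_mul_indicator_le hC hr d (Finset.empty_subset L)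

lemma lintegral_add_pow_le {f g : Ω → ℝ≥0∞} (hf : AEMeasurable f μ) (d : ℕ) :
    ∫⁻ ω, (f ω + g ω) ^ d ∂μ ≤ 2 ^ d * (∫⁻ ω, f ω ^ d ∂μ + ∫⁻ ω, g ω ^ d ∂μ) := by
  calc ∫⁻ ω, (f ω + g ω) ^ d ∂μ ≤ ∫⁻ ω, 2 ^ d * (f ω ^ d + g ω ^ d) ∂μ := by
        gcongr with ω
        simpa [← ENNReal.rpow_natCast] using
          ENNReal.add_rpow_le_two_rpow_mul_rpow_add_rpow (f ω) (g ω) d.cast_nonneg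
    _ = _ := by rw [lintegral_const_mul' _ _ (by simp), lintegral_add_left' (hf.pow_const d)]

end FourthMoment

lemma ofReal_abs_card_occupied_sub_card_le {Ω : Type*} {p : ℕ → ℝ} (B : ℕ → Ω → ℕ) (n : ℕ)
    {L : Finset ℕ} (hL : ∀ k, k ∈ L ↔ 1 ≤ (n : ℝ) * p k) (ω : Ω) :
    ENNReal.ofReal |(((Finset.range n).image fun j => B j ω).card : ℝ) - L.card|
      ≤ eventCount (Finset.range n) (fun j => B j ⁻¹' {k | (n : ℝ) * p k < 1}) ω
        + eventCount L (fun k => {ω | ∀ j ∈ Finset.range n, B j ω ≠ k}) ω := by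
  refine (ENNReal.ofReal_le_ofReal (abs_card_image_sub_card_le _ _ L)).trans_eq ?_
  rw [ENNReal.ofReal_add (by positivity) (by positivity), ENNReal.ofReal_natCast,
    ENNReal.ofReal_natCast]
  congr 1 <;> simp [eventCount, Set.indicator_apply, hL]

section Occupancy

variable {Ω : Type*} [MeasurableSpace Ω] {μ : Measure Ω} {p : ℕ → ℝ}

lemma measure_preimage_eq_ofReal_tsum {g : Ω → ℕ} (hp : ∀ k, 0 ≤ p k) (hps : Summable p)
    (hg : Measurable g) (hlaw : ∀ k, μ {ω | g ω = k} = ENNReal.ofReal (p k)) (S : Set ℕ) :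
    μ (g ⁻¹' S) = ENNReal.ofReal (∑' k, S.indicator p k) := by
  rw [← tsum_measure_preimage_singleton S.to_countable fun k _ => hg (measurableSet_singleton k),
    ENNReal.ofReal_tsum_of_nonneg (fun k => S.indicator_nonneg (fun k _ => hp k) k)
      (hps.indicator S), tsum_subtype S fun k => μ (g ⁻¹' {k})]
  refine tsum_congr fun k => ?_
  by_cases hk : k ∈ S <;> simp [hk, ← hlaw, Set.preimage, eq_comm]

variable {B : ℕ → Ω → ℕ}

lemma measurableSet_forall_ne (hB : ∀ j, Measurable (B j)) (J : Finset ℕ) (k : ℕ) :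
    MeasurableSet {ω | ∀ j ∈ J, B j ω ≠ k} := by
  simp only [Set.ofPred_forall]
  exact J.measurableSet_biInter fun j _ => (measurableSet_singleton k).compl.preimage (hB j)

lemma measure_biInter_forall_ne_le [IsProbabilityMeasure μ] (hp : ∀ k, 0 ≤ p k)
    (hp1 : HasSum p 1) (hB : ∀ j, Measurable (B j)) (hindep : iIndepFun B μ)
    (hlaw : ∀ j k, μ {ω | B j ω = k} = ENNReal.ofReal (p k)) (n : ℕ) (s : Finset ℕ) :
    μ (⋂ k ∈ s, {ω | ∀ j ∈ Finset.range n, B j ω ≠ k})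
      ≤ ∏ k ∈ s, ENNReal.ofReal (Real.exp (-(n * p k))) := by
  have h_eq : ⋂ k ∈ s, {ω | ∀ j ∈ Finset.range n, B j ω ≠ k}
      = ⋂ j ∈ Finset.range n, B j ⁻¹' (↑s)ᶜ := by
    ext ω
    simp only [Set.mem_iInter, Set.mem_ofPred_eq, Set.mem_preimage, Set.mem_compl_iff,
      Finset.mem_coe]
    exact ⟨fun h j hj hs => h _ hs j hj rfl, fun h k hk j hj hjk => h j hj (hjk ▸ hk)⟩
  have h_mass : ∑ k ∈ s, p k ≤ 1 := sum_le_hasSum s (fun k _ => hp k) hp1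
  have h_miss : ∀ j, μ (B j ⁻¹' (↑s)ᶜ) = ENNReal.ofReal (1 - ∑ k ∈ s, p k) := by
    intro j
    rw [Set.preimage_compl, prob_compl_eq_one_sub (hB j (Finset.measurableSet s)),
      measure_preimage_eq_ofReal_tsum hp hp1.summable (hB j) (hlaw j), ← sum_eq_tsum_indicator,
      ENNReal.ofReal_sub _ (Finset.sum_nonneg fun k _ => hp k), ENNReal.ofReal_one]
  rw [h_eq, hindep.meas_biInter fun j _ => ⟨_, MeasurableSet.of_discrete, rfl⟩,
    Finset.prod_congr rfl fun j _ => h_miss j, Finset.prod_const, Finset.card_range,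
    ← ENNReal.ofReal_pow (sub_nonneg.2 h_mass),
    ← ENNReal.ofReal_prod_of_nonneg fun k _ => (Real.exp_pos _).le]
  refine ENNReal.ofReal_le_ofReal ?_
  calc (1 - ∑ k ∈ s, p k) ^ n ≤ Real.exp (-∑ k ∈ s, p k) ^ n :=
        pow_le_pow_left₀ (sub_nonneg.2 h_mass) (Real.one_sub_le_exp_neg _) n
    _ = ∏ k ∈ s, Real.exp (-(n * p k)) := by
        rw [← Real.exp_nat_mul, ← Real.exp_sum, Finset.sum_neg_distrib, mul_neg, Finset.mul_sum]

lemma lintegral_eventCount_preimage_pow_le (hp : ∀ k, 0 ≤ p k) (hps : Summable p)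
    (hB : ∀ j, Measurable (B j)) (hindep : iIndepFun B μ)
    (hlaw : ∀ j k, μ {ω | B j ω = k} = ENNReal.ofReal (p k)) (S : Set ℕ) (n d : ℕ) :
    ∫⁻ ω, eventCount (Finset.range n) (fun j => B j ⁻¹' S) ω ^ d ∂μ
      ≤ (ENNReal.ofReal (n * ∑' k, S.indicator p k) + d) ^ d := by
  have h_mass : ∀ j, μ (B j ⁻¹' S) = ENNReal.ofReal (∑' k, S.indicator p k) :=
    fun j => measure_preimage_eq_ofReal_tsum hp hps (hB j) (hlaw j) S
  convert lintegral_eventCount_pow_le (fun j => hB j MeasurableSet.of_discrete)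
    (fun s _ => (hindep.meas_biInter fun j _ => ⟨S, MeasurableSet.of_discrete, rfl⟩).le) d
  simp [h_mass, ENNReal.ofReal_mul n.cast_nonneg]

lemma lintegral_eventCount_forall_ne_pow_le [IsProbabilityMeasure μ] (hp : ∀ k, 0 ≤ p k)
    (hp1 : HasSum p 1) (hB : ∀ j, Measurable (B j)) (hindep : iIndepFun B μ)
    (hlaw : ∀ j k, μ {ω | B j ω = k} = ENNReal.ofReal (p k)) (L : Finset ℕ) (n d : ℕ) :
    ∫⁻ ω, eventCount L (fun k => {ω | ∀ j ∈ Finset.range n, B j ω ≠ k}) ω ^ d ∂μ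
      ≤ (ENNReal.ofReal (∑ k ∈ L, Real.exp (-(n * p k))) + d) ^ d := by
  rw [ENNReal.ofReal_sum_of_nonneg fun k _ => (Real.exp_pos _).le]
  exact lintegral_eventCount_pow_le (measurableSet_forall_ne hB _)
    (fun s _ => measure_biInter_forall_ne_le hp hp1 hB hindep hlaw n s) d

lemma lintegral_eventCount_add_eventCount_pow_four_le [IsProbabilityMeasure μ]
    (hp : ∀ k, 0 ≤ p k) (hp1 : HasSum p 1) (hB : ∀ j, Measurable (B j)) (hindep : iIndepFun B μ)
    (hlaw : ∀ j k, μ {ω | B j ω = k} = ENNReal.ofReal (p k)) (n : ℕ) {L : Finset ℕ}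
    (hL : ∀ k, k ∈ L ↔ 1 ≤ (n : ℝ) * p k) :
    ∫⁻ ω, (eventCount (Finset.range n) (fun j => B j ⁻¹' {k | (n : ℝ) * p k < 1}) ω
        + eventCount L (fun k => {ω | ∀ j ∈ Finset.range n, B j ω ≠ k}) ω) ^ 4 ∂μ
      ≤ ENNReal.ofReal (16 * ((n * ∑' k, (if n * p k < 1 then p k else 0) + 4) ^ 4
          + (∑' k, (if 1 ≤ n * p k then Real.exp (-(n * p k)) else 0) + 4) ^ 4)) := by
  have h_large : ∑' k, (if 1 ≤ (n : ℝ) * p k then Real.exp (-(n * p k)) else 0)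
      = ∑ k ∈ L, Real.exp (-(n * p k)) := by
    rw [tsum_eq_sum fun k hk => if_neg (by rwa [← hL]),
      Finset.sum_ite_of_true fun k hk => (hL k).1 hk]
  set δ : ℝ := n * ∑' k, (if n * p k < 1 then p k else 0)
  set θ : ℝ := ∑' k, (if 1 ≤ n * p k then Real.exp (-(n * p k)) else 0)
  have h_small : ∫⁻ ω, eventCount (Finset.range n)
      (fun j => B j ⁻¹' {k | (n : ℝ) * p k < 1}) ω ^ 4 ∂μ ≤ (ENNReal.ofReal δ + 4) ^ 4 := by
    simpa only [Set.indicator_apply, Set.mem_ofPred_eq, Nat.cast_ofNat] using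
      lintegral_eventCount_preimage_pow_le hp hp1.summable hB hindep hlaw
        {k | (n : ℝ) * p k < 1} n 4
  have h_empty : ∫⁻ ω, eventCount L (fun k => {ω | ∀ j ∈ Finset.range n, B j ω ≠ k}) ω ^ 4 ∂μ
      ≤ (ENNReal.ofReal θ + 4) ^ 4 := by
    simpa only [h_large, Nat.cast_ofNat] using
      lintegral_eventCount_forall_ne_pow_le hp hp1 hB hindep hlaw L n 4
  have hδ : 0 ≤ δ := mul_nonneg n.cast_nonneg (tsum_nonneg fun k => by split_ifs <;> simp [hp])
  have hθ : 0 ≤ θ := tsum_nonneg fun k => by split_ifs <;> positivity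
  calc _ ≤ 2 ^ 4 * ((ENNReal.ofReal δ + 4) ^ 4 + (ENNReal.ofReal θ + 4) ^ 4) :=
        (lintegral_add_pow_le ((measurable_eventCount fun j =>
          hB j MeasurableSet.of_discrete).aemeasurable) 4).trans (by gcongr)
    _ = _ := by
      rw [ENNReal.ofReal_mul (p := 16) (by norm_num), ENNReal.ofReal_add (by positivity)
        (by positivity), ENNReal.ofReal_pow (by positivity), ENNReal.ofReal_pow (by positivity),
        ENNReal.ofReal_add hδ (by norm_num), ENNReal.ofReal_add hθ (by norm_num)]
      norm_num

end Occupancy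

lemma summable_mul_add_pow {w x : ℕ → ℝ} (hw : ∀ n, 0 ≤ w n) (c : ℝ) {d : ℕ} (hd : Even d)
    (hw_sum : Summable w) (hwx : Summable fun n => w n * x n ^ d) :
    Summable fun n => w n * (x n + c) ^ d := by
  refine Summable.of_nonneg_of_le (fun n => mul_nonneg (hw n) (hd.pow_nonneg _)) (fun n => ?_)
    ((hwx.add (hw_sum.mul_right (c ^ d))).mul_left (2 ^ (d - 1)))
  calc w n * (x n + c) ^ d ≤ w n * (2 ^ (d - 1) * (x n ^ d + c ^ d)) :=
        mul_le_mul_of_nonneg_left hd.add_pow_le (hw n)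
    _ = _ := by ring

section AlmostSure

variable {Ω : Type*} [MeasurableSpace Ω] {μ : Measure Ω}

lemma ae_tendsto_zero_of_tsum_measure_ne_top {Y : ℕ → Ω → ℝ}
    (h : ∀ ε > 0, ∑' n, μ {ω | ε ≤ |Y n ω|} ≠ ∞) :
    ∀ᵐ ω ∂μ, Tendsto (fun n => Y n ω) atTop (𝓝 0) := by
  have h_small : ∀ m : ℕ, ∀ᵐ ω ∂μ, ∀ᶠ n in atTop, |Y n ω| < 1 / (m + 1) := fun m => by
    filter_upwards [ae_eventually_notMem (h _ Nat.one_div_pos_of_nat)] with ω hω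
    filter_upwards [hω] with n hn using not_le.1 hn
  filter_upwards [ae_all_iff.2 h_small] with ω hω
  rw [Metric.tendsto_nhds]
  intro ε hε
  obtain ⟨m, hm⟩ := exists_nat_one_div_lt hε
  filter_upwards [hω m] with n hn
  rw [Real.dist_0_eq_abs]
  exact hn.trans hm

lemma ae_tendsto_rpow_neg_half_mul_zero {D : ℕ → Ω → ℝ} {W : ℕ → Ω → ℝ≥0∞} {M : ℕ → ℝ}
    (hW : ∀ n, AEMeasurable (W n) μ) (hDW : ∀ n ω, ENNReal.ofReal |D n ω| ≤ W n ω)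
    (hM : ∀ n, ∫⁻ ω, W n ω ^ 4 ∂μ ≤ ENNReal.ofReal (M n))
    (hMsum : Summable fun n : ℕ => ((n : ℝ) ^ 2)⁻¹ * M n) :
    ∀ᵐ ω ∂μ, Tendsto (fun n : ℕ => (n : ℝ) ^ ((-1 : ℝ) / 2) * D n ω) atTop (𝓝 0) := by
  -- Shift the index: at `n = 0` the threshold `ε √n` vanishes and Markov's bound is void.
  suffices ∀ᵐ ω ∂μ, Tendsto (fun n => ((n + 1 : ℕ) : ℝ) ^ ((-1 : ℝ) / 2) * D (n + 1) ω)
      atTop (𝓝 0) by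
    filter_upwards [this] with ω hω using (tendsto_add_atTop_iff_nat 1).1 hω
  refine ae_tendsto_zero_of_tsum_measure_ne_top fun ε hε => ?_
  have h_tail : ∀ n : ℕ, μ {ω | ε ≤ |((n + 1 : ℕ) : ℝ) ^ ((-1 : ℝ) / 2) * D (n + 1) ω|}
      ≤ ENNReal.ofReal ((ε ^ 4)⁻¹ * ((((n + 1 : ℕ) : ℝ) ^ 2)⁻¹ * M (n + 1))) := by
    intro n
    set x : ℝ := ((n + 1 : ℕ) : ℝ)
    have hx : 0 < x := by positivity
    have h_scale : x ^ ((-1 : ℝ) / 2) = (√x)⁻¹ := by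
      rw [neg_div, Real.rpow_neg hx.le, Real.sqrt_eq_rpow]
    have ha : 0 < ε * √x := by positivity
    calc μ {ω | ε ≤ |x ^ ((-1 : ℝ) / 2) * D (n + 1) ω|}
        ≤ μ {ω | ENNReal.ofReal (ε * √x) ^ 4 ≤ W (n + 1) ω ^ 4} := by
          refine measure_mono fun ω (hω : ε ≤ _) => ?_
          have hsx : 0 < √x := Real.sqrt_pos.2 hx
          rw [h_scale, abs_mul, abs_inv, abs_of_pos hsx, inv_mul_eq_div, le_div_iff₀ hsx] at hω
          exact pow_le_pow_left' ((ENNReal.ofReal_le_ofReal hω).trans (hDW _ ω)) 4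
      _ ≤ (∫⁻ ω, W (n + 1) ω ^ 4 ∂μ) / ENNReal.ofReal (ε * √x) ^ 4 :=
          meas_ge_le_lintegral_div ((hW _).pow_const 4) (by positivity) (by simp)
      _ ≤ ENNReal.ofReal (M (n + 1)) / ENNReal.ofReal (ε ^ 4 * x ^ 2) := by
          rw [← ENNReal.ofReal_pow ha.le, mul_pow, show √x ^ 4 = x ^ 2 by
            rw [show 4 = 2 * 2 by rfl, pow_mul, Real.sq_sqrt hx.le]]
          gcongr
          exact hM _
      _ = _ := by
          rw [← ENNReal.ofReal_div_of_pos (by positivity)]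
          congr 1
          field_simp
  refine ne_top_of_le_ne_top ?_ (ENNReal.tsum_le_tsum h_tail)
  exact ENNReal.tsum_coe_ne_top_iff_summable.2
    (((summable_nat_add_iff 1).2 hMsum).mul_left _).toNNReal

end AlmostSure

/-- **Lemma 1.** In the infinite occupancy scheme with deterministic probabilities
`(p k)`, where ball `j` falls into box `B j` and `P(B j = k) = p k` independently,
let `Z n k` be the number of the first `n` balls in box `k` and
`K n = #{k : Z n k ≥ 1}` the number of occupied boxes. If
`∑_{n≥1} n⁻² Θ⌊eⁿ⌋⁴ < ∞` and `∑_{n≥1} n⁻² Δ⌊eⁿ⌋⁴ < ∞`, where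
`Θ n = ∑_k e^{-n p k} 1{n p k ≥ 1}` and `Δ n = n ∑_k p k 1{n p k < 1}`, then
`n^{-1/2} (K ⌊eⁿ⌋ - ∑_k 1{⌊eⁿ⌋ p k ≥ 1}) → 0` almost surely. -/
theorem occupancy_as_approximation_by_large_boxes
    {Ω : Type*} [MeasureSpace Ω] [IsProbabilityMeasure (volume : Measure Ω)]
    (p : ℕ → ℝ) (hp : ∀ k, 0 ≤ p k) (hp1 : HasSum p 1)
    (B : ℕ → Ω → ℕ) (hBmeas : ∀ j, Measurable (B j))
    (hBindep : iIndepFun B volume)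
    (hBdist : ∀ j k, volume {ω | B j ω = k} = ENNReal.ofReal (p k))
    (Z : ℕ → ℕ → Ω → ℕ)
    (hZ : ∀ n k ω, Z n k ω = ((Finset.range n).filter (fun j => B j ω = k)).card)
    (K : ℕ → Ω → ℝ)
    (hK : ∀ n ω, K n ω = ∑' k : ℕ, (if 1 ≤ Z n k ω then (1 : ℝ) else 0))
    (Θ Δ : ℕ → ℝ)
    (hΘ : ∀ n, Θ n = ∑' k : ℕ, (if 1 ≤ n * p k then Real.exp (-(n * p k)) else 0))
    (hΔ : ∀ n, Δ n = n * ∑' k : ℕ, (if n * p k < 1 then p k else 0))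
    (hΘsum : Summable fun n : ℕ => ((n : ℝ) ^ 2)⁻¹ * (Θ ⌊Real.exp n⌋₊) ^ 4)
    (hΔsum : Summable fun n : ℕ => ((n : ℝ) ^ 2)⁻¹ * (Δ ⌊Real.exp n⌋₊) ^ 4) :
    ∀ᵐ ω ∂(volume : Measure Ω),
      Tendsto (fun n : ℕ => ((n : ℝ) ^ ((-1 : ℝ) / 2)) *
          (K ⌊Real.exp n⌋₊ ω - ∑' k : ℕ, (if 1 ≤ (⌊Real.exp n⌋₊ : ℝ) * p k then (1 : ℝ) else 0)))
        atTop (nhds 0) := by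
  classical
  have hfin := finite_setOf_one_le_mul hp1.summable
  have hL : ∀ n k, k ∈ (hfin n).toFinset ↔ 1 ≤ (n : ℝ) * p k := fun n k => (hfin n).mem_toFinset
  have hK' : ∀ n ω, K n ω = ((Finset.range n).image fun j => B j ω).card := fun n ω => by
    rw [hK]
    exact tsum_ite_one_eq_card fun k => by
      simp [hZ, Finset.one_le_card, Finset.filter_nonempty_iff]
  refine ae_tendsto_rpow_neg_half_mul_zero
    (W := fun n ω => eventCount (Finset.range ⌊Real.exp n⌋₊)
      (fun j => B j ⁻¹' {k | (⌊Real.exp n⌋₊ : ℝ) * p k < 1}) ω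
      + eventCount (hfin ⌊Real.exp n⌋₊).toFinset
        (fun k => {ω | ∀ j ∈ Finset.range ⌊Real.exp n⌋₊, B j ω ≠ k}) ω)
    (M := fun n => 16 * ((Δ ⌊Real.exp n⌋₊ + 4) ^ 4 + (Θ ⌊Real.exp n⌋₊ + 4) ^ 4))
    (fun n => ?_) (fun n ω => ?_) (fun n => ?_) ?_
  · exact ((measurable_eventCount fun j => hBmeas j MeasurableSet.of_discrete).add
      (measurable_eventCount (measurableSet_forall_ne hBmeas _))).aemeasurable
  · rw [hK', tsum_ite_one_eq_card (hL _ · |>.symm)]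
    exact ofReal_abs_card_occupied_sub_card_le B _ (hL _) ω
  · rw [hΔ, hΘ]
    exact lintegral_eventCount_add_eventCount_pow_four_le hp hp1 hBmeas hBindep hBdist _ (hL _)
  · have hw := Real.summable_nat_pow_inv.2 one_lt_two
    have hw0 : ∀ n : ℕ, 0 ≤ ((n : ℝ) ^ 2)⁻¹ := fun n => by positivity
    exact (((summable_mul_add_pow hw0 4 ⟨2, rfl⟩ hw hΔsum).add
      (summable_mul_add_pow hw0 4 ⟨2, rfl⟩ hw hΘsum)).mul_left 16).congr fun n => by ring
end

section
/- For every n ∈ ℕ, E ( Σ_{k≥1} 1{Z_{n,k} = 0} 1{n p_k ≥ 1} )^4 ≤ Θ_n + 7 Θ_n² + 6 Θ_n³ + Θ_n⁴. -/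
/-!
Only the finitely many boxes with `n p_k ≥ 1` matter. For a set `T` of boxes, the probability
that all of them are empty is `(1 - ∑_{k ∈ T} p_k)^n ≤ ∏_{k ∈ T} e^{-n p_k}`. Expanding the
`m`-th power of the number of empty boxes and bounding each joint probability this way, the
moments are dominated by those of a Poisson variable with mean `Θ_n`, whose fourth moment is
`Θ_n + 7 Θ_n² + 6 Θ_n³ + Θ_n⁴`.
-/

open MeasureTheory ProbabilityTheory Filter Set
open scoped ENNReal Topology

/-- `poissonShiftedMoment θ m s = 𝔼 (s + N) ^ m` for `N ∼ Poisson θ`: the recursion is the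
Stein identity `𝔼 [N g(N)] = θ 𝔼 [g(N + 1)]`. -/
def poissonShiftedMoment {R : Type*} [CommSemiring R] (θ : R) : ℕ → ℕ → R
  | 0, _ => 1
  | m + 1, s => s * poissonShiftedMoment θ m s + θ * poissonShiftedMoment θ m (s + 1)

theorem poissonShiftedMoment_four_zero {R : Type*} [CommSemiring R] (θ : R) :
    poissonShiftedMoment θ 4 0 = θ + 7 * θ ^ 2 + 6 * θ ^ 3 + θ ^ 4 := by
  simp only [poissonShiftedMoment]
  push_cast
  ring

theorem poissonShiftedMoment_ofReal_four_zero {x : ℝ} (hx : 0 ≤ x) :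
    poissonShiftedMoment (ENNReal.ofReal x) 4 0 =
      ENNReal.ofReal (x + 7 * x ^ 2 + 6 * x ^ 3 + x ^ 4) := by
  lift x to NNReal using hx
  rw [poissonShiftedMoment_four_zero, ENNReal.ofReal_coe_nnreal]
  norm_cast
  exact ENNReal.ofReal_coe_nnreal.symm

theorem indicator_biInter_mul_sum_indicator_pow_succ {Ω : Type*} (E : ℕ → Set Ω)
    (T F : Finset ℕ) (m : ℕ) (ω : Ω) :
    (⋂ k ∈ T, E k).indicator 1 ω * (∑ k ∈ F, (E k).indicator 1 ω) ^ (m + 1) =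
      ∑ a ∈ F, (⋂ k ∈ insert a T, E k).indicator (1 : Ω → ℝ≥0∞) ω *
        (∑ k ∈ F, (E k).indicator 1 ω) ^ m := by
  simp only [pow_succ', Finset.sum_mul, Finset.mul_sum, Finset.set_biInter_insert,
    Set.inter_indicator_one, Pi.mul_apply, mul_assoc, mul_left_comm]

section MomentComparison

variable {Ω : Type*} [MeasurableSpace Ω] {μ : Measure Ω} {E : ℕ → Set Ω} {f : ℕ → ℝ≥0∞}

-- Generalised over `T` for the induction: each factor of the power adds one index to `T`.
theorem lintegral_indicator_biInter_mul_sum_indicator_pow_le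
    (hE : ∀ k, MeasurableSet (E k)) (hEf : ∀ T : Finset ℕ, μ (⋂ k ∈ T, E k) ≤ ∏ k ∈ T, f k)
    (F : Finset ℕ) (m : ℕ) (T : Finset ℕ) :
    ∫⁻ ω, (⋂ k ∈ T, E k).indicator 1 ω * (∑ k ∈ F, (E k).indicator 1 ω) ^ m ∂μ ≤
      (∏ k ∈ T, f k) * poissonShiftedMoment (∑ k ∈ F, f k) m T.card := by
  have hET : ∀ T : Finset ℕ, MeasurableSet (⋂ k ∈ T, E k) := fun T =>
    Finset.measurableSet_biInter T fun k _ => hE k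
  induction m generalizing T with
  | zero =>
    simpa [poissonShiftedMoment, lintegral_indicator_one (hET T)] using hEf T
  | succ m ih =>
    set θ := ∑ k ∈ F, f k
    set P := ∏ k ∈ T, f k
    set c := poissonShiftedMoment θ m T.card
    set c' := poissonShiftedMoment θ m (T.card + 1)
    have hterm : ∀ a ∈ F,
        ∫⁻ ω, (⋂ k ∈ insert a T, E k).indicator 1 ω * (∑ k ∈ F, (E k).indicator 1 ω) ^ m ∂μ ≤
          (if a ∈ T then P * c else 0) + f a * (P * c') := by
      intro a _
      by_cases ha : a ∈ T
      · simpa [ha, Finset.insert_eq_of_mem ha] using le_add_right (ih T)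
      · simpa [ha, P, Finset.prod_insert ha, Finset.card_insert_of_notMem ha, mul_assoc]
          using ih (insert a T)
    have hcount : ((F.filter (· ∈ T)).card : ℝ≥0∞) ≤ T.card := by
      exact_mod_cast Finset.card_le_card fun x hx => (Finset.mem_filter.1 hx).2
    calc ∫⁻ ω, (⋂ k ∈ T, E k).indicator 1 ω * (∑ k ∈ F, (E k).indicator 1 ω) ^ (m + 1) ∂μ
        = ∑ a ∈ F, ∫⁻ ω, (⋂ k ∈ insert a T, E k).indicator 1 ω *
            (∑ k ∈ F, (E k).indicator 1 ω) ^ m ∂μ := by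
          simp_rw [indicator_biInter_mul_sum_indicator_pow_succ]
          refine lintegral_finsetSum _ fun a _ => ?_
          exact (measurable_one.indicator (hET _)).mul
            ((Finset.measurable_sum _ fun k _ => measurable_one.indicator (hE k)).pow_const m)
      _ ≤ ∑ a ∈ F, ((if a ∈ T then P * c else 0) + f a * (P * c')) := Finset.sum_le_sum hterm
      _ = (F.filter (· ∈ T)).card * (P * c) + θ * (P * c') := by
          rw [Finset.sum_add_distrib, Finset.sum_ite, Finset.sum_const_zero, add_zero,
            Finset.sum_const, nsmul_eq_mul, Finset.sum_mul]
      _ ≤ T.card * (P * c) + θ * (P * c') := by gcongr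
      _ = P * poissonShiftedMoment θ (m + 1) T.card := by
          simp only [poissonShiftedMoment, c, c']
          ring

theorem lintegral_sum_indicator_pow_le
    (hE : ∀ k, MeasurableSet (E k)) (hEf : ∀ T : Finset ℕ, μ (⋂ k ∈ T, E k) ≤ ∏ k ∈ T, f k)
    (F : Finset ℕ) (m : ℕ) :
    ∫⁻ ω, (∑ k ∈ F, (E k).indicator 1 ω) ^ m ∂μ ≤ poissonShiftedMoment (∑ k ∈ F, f k) m 0 := by
  simpa using lintegral_indicator_biInter_mul_sum_indicator_pow_le hE hEf F m ∅

end MomentComparison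

section Occupancy

variable {Ω : Type*}

def boxesEmpty (B : ℕ → Ω → ℕ) (n : ℕ) (T : Finset ℕ) : Set Ω :=
  ⋂ j ∈ Finset.range n, B j ⁻¹' (↑T)ᶜ

theorem mem_boxesEmpty_singleton_iff (B : ℕ → Ω → ℕ) (n k : ℕ) (ω : Ω) :
    ω ∈ boxesEmpty B n {k} ↔ ((Finset.range n).filter (fun j => B j ω = k)).card = 0 := by
  simp [boxesEmpty, Finset.filter_eq_empty_iff]

theorem biInter_boxesEmpty_singleton (B : ℕ → Ω → ℕ) (n : ℕ) (T : Finset ℕ) :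
    ⋂ k ∈ T, boxesEmpty B n {k} = boxesEmpty B n T := by
  ext ω
  simp only [boxesEmpty, Set.mem_iInter, Set.mem_preimage, Set.mem_compl_iff, Finset.mem_coe,
    Finset.mem_singleton]
  exact ⟨fun h j hj hjT => h _ hjT j hj rfl, fun h k hk j hj hjk => h j hj (hjk ▸ hk)⟩

variable [MeasurableSpace Ω] {μ : Measure Ω} [IsProbabilityMeasure μ] {p : ℕ → ℝ}

theorem measure_preimage_compl_finset_le_exp {X : Ω → ℕ} (hX : Measurable X)
    (hp : ∀ k, 0 ≤ p k) (hXdist : ∀ k, μ {ω | X ω = k} = ENNReal.ofReal (p k)) (T : Finset ℕ) :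
    μ (X ⁻¹' (↑T)ᶜ) ≤ ENNReal.ofReal (Real.exp (-∑ k ∈ T, p k)) := by
  have hT : μ (X ⁻¹' ↑T) = ENNReal.ofReal (∑ k ∈ T, p k) := by
    rw [← sum_measure_preimage_singleton T fun k _ => hX (measurableSet_singleton k),
      ENNReal.ofReal_sum_of_nonneg fun k _ => hp k]
    exact Finset.sum_congr rfl fun k _ => hXdist k
  rw [Set.preimage_compl, prob_compl_eq_one_sub (hX T.measurableSet), hT, ← ENNReal.ofReal_one,
    ← ENNReal.ofReal_sub _ (Finset.sum_nonneg fun k _ => hp k)]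
  exact ENNReal.ofReal_le_ofReal (by linarith [Real.add_one_le_exp (-∑ k ∈ T, p k)])

theorem measurableSet_boxesEmpty {B : ℕ → Ω → ℕ} (hB : ∀ j, Measurable (B j)) (n : ℕ)
    (T : Finset ℕ) : MeasurableSet (boxesEmpty B n T) :=
  Finset.measurableSet_biInter _ fun j _ => hB j T.measurableSet.compl

theorem measure_boxesEmpty_le {B : ℕ → Ω → ℕ} (hB : ∀ j, Measurable (B j))
    (hBindep : iIndepFun B μ) (hp : ∀ k, 0 ≤ p k)
    (hBdist : ∀ j k, μ {ω | B j ω = k} = ENNReal.ofReal (p k)) (n : ℕ) (T : Finset ℕ) :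
    μ (boxesEmpty B n T) ≤ ∏ k ∈ T, ENNReal.ofReal (Real.exp (-(n * p k))) :=
  calc μ (boxesEmpty B n T)
      = ∏ j ∈ Finset.range n, μ (B j ⁻¹' (↑T)ᶜ) :=
        hBindep.meas_biInter fun j _ => ⟨(↑T)ᶜ, T.measurableSet.compl, rfl⟩
    _ ≤ ∏ _j ∈ Finset.range n, ENNReal.ofReal (Real.exp (-∑ k ∈ T, p k)) :=
        Finset.prod_le_prod' fun j _ => measure_preimage_compl_finset_le_exp (hB j) hp (hBdist j) T
    _ = ∏ k ∈ T, ENNReal.ofReal (Real.exp (-(n * p k))) := by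
        rw [Finset.prod_const, Finset.card_range, ← ENNReal.ofReal_pow (Real.exp_pos _).le,
          ← Real.exp_nat_mul, ← ENNReal.ofReal_prod_of_nonneg fun k _ => (Real.exp_pos _).le,
          ← Real.exp_sum, mul_neg, Finset.mul_sum, Finset.sum_neg_distrib]

end Occupancy

theorem finite_setOf_one_le_mul_of_tendsto_zero {p : ℕ → ℝ} (hp : Tendsto p atTop (𝓝 0))
    (c : ℝ) : {k | 1 ≤ c * p k}.Finite := by
  have hcp : Tendsto (fun k => c * p k) atTop (𝓝 0) := by simpa using hp.const_mul c
  have hlt : ∀ᶠ k in atTop, c * p k < 1 := hcp.eventually_lt_const one_pos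
  rw [← Nat.cofinite_eq_atTop, eventually_cofinite] at hlt
  simpa only [not_lt] using hlt

/-- In the infinite occupancy scheme with deterministic probabilities `(p k)`,
for every `n`,
`𝔼 (∑_k 1{Z n k = 0} 1{n p k ≥ 1})⁴ ≤ Θ n + 7 Θ n ² + 6 Θ n ³ + Θ n ⁴`,
where `Θ n = ∑_k e^{-n p k} 1{n p k ≥ 1}`. -/
theorem fourth_moment_empty_large_boxes
    {Ω : Type*} [MeasureSpace Ω] [IsProbabilityMeasure (volume : Measure Ω)]
    (p : ℕ → ℝ) (hp : ∀ k, 0 ≤ p k) (hp1 : HasSum p 1)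
    (B : ℕ → Ω → ℕ) (hBmeas : ∀ j, Measurable (B j))
    (hBindep : iIndepFun B volume)
    (hBdist : ∀ j k, volume {ω | B j ω = k} = ENNReal.ofReal (p k))
    (Z : ℕ → ℕ → Ω → ℕ)
    (hZ : ∀ n k ω, Z n k ω = ((Finset.range n).filter (fun j => B j ω = k)).card)
    (Θ : ℕ → ℝ)
    (hΘ : ∀ n, Θ n = ∑' k : ℕ, (if 1 ≤ n * p k then Real.exp (-(n * p k)) else 0))
    (n : ℕ) :
    ∫⁻ ω, ENNReal.ofReal
        ((∑' k : ℕ, (if Z n k ω = 0 ∧ 1 ≤ n * p k then (1 : ℝ) else 0)) ^ 4) ∂volume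
      ≤ ENNReal.ofReal (Θ n + 7 * Θ n ^ 2 + 6 * Θ n ^ 3 + Θ n ^ 4) := by
  classical
  set F := (finite_setOf_one_le_mul_of_tendsto_zero hp1.summable.tendsto_atTop_zero n).toFinset
  have hF : ∀ k, k ∈ F ↔ 1 ≤ n * p k := fun k => Set.Finite.mem_toFinset _
  have hΘF : Θ n = ∑ k ∈ F, Real.exp (-(n * p k)) := by
    rw [hΘ n, tsum_eq_sum fun k hk => if_neg fun h => hk ((hF k).2 h)]
    exact Finset.sum_congr rfl fun k hk => if_pos ((hF k).1 hk)
  have hcount : ∀ ω, ENNReal.ofReal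
      ((∑' k : ℕ, (if Z n k ω = 0 ∧ 1 ≤ n * p k then (1 : ℝ) else 0)) ^ 4) =
        (∑ k ∈ F, (boxesEmpty B n {k}).indicator 1 ω) ^ 4 := by
    intro ω
    rw [tsum_eq_sum fun k hk => if_neg fun h => hk ((hF k).2 h.2),
      ENNReal.ofReal_pow (Finset.sum_nonneg fun k _ => by positivity),
      ENNReal.ofReal_sum_of_nonneg fun k _ => by positivity]
    refine congrArg (· ^ 4) (Finset.sum_congr rfl fun k hk => ?_)
    simp [Set.indicator_apply, mem_boxesEmpty_singleton_iff, hZ, (hF k).1 hk,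
      apply_ite ENNReal.ofReal]
  rw [lintegral_congr hcount]
  calc ∫⁻ ω, (∑ k ∈ F, (boxesEmpty B n {k}).indicator 1 ω) ^ 4 ∂volume
      ≤ poissonShiftedMoment (∑ k ∈ F, ENNReal.ofReal (Real.exp (-(n * p k)))) 4 0 :=
        lintegral_sum_indicator_pow_le (fun k => measurableSet_boxesEmpty hBmeas n {k})
          (fun T => biInter_boxesEmpty_singleton B n T ▸
            measure_boxesEmpty_le hBmeas hBindep hp hBdist n T) F 4
    _ = ENNReal.ofReal (Θ n + 7 * Θ n ^ 2 + 6 * Θ n ^ 3 + Θ n ^ 4) := by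
        rw [← ENNReal.ofReal_sum_of_nonneg fun k _ => (Real.exp_pos _).le, ← hΘF]
        exact poissonShiftedMoment_ofReal_four_zero
          (hΘF ▸ Finset.sum_nonneg fun k _ => (Real.exp_pos _).le)
end

section
/- For every n ∈ ℕ, E ( Σ_{k≥1} 1{Z_{n,k} ≥ 1} 1{n p_k < 1} )^4 ≤ Δ_n + 7 Δ_n² + 6 Δ_n³ + Δ_n⁴. -/
/-!
A small box (one with `n p_k < 1`) is occupied only if some ball lands in it, so the number of
occupied small boxes is at most the number `N` of balls landing in small boxes.
The events "ball `j` lands in a small box" are independent with common probability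
`q = ∑_{n p_k < 1} p_k`, so `N` is binomial `(n, q)` and its factorial moments are
`𝔼 (N)_k = (n)_k q^k ≤ (n q)^k = Δ_n^k`. Expanding `x^4` in falling factorials,
`x^4 = (x)_1 + 7 (x)_2 + 6 (x)_3 + (x)_4`, gives the bound.
-/

open MeasureTheory ProbabilityTheory
open scoped ENNReal NNReal Finset
open Finset (powersetCard)

theorem Nat.pow_four_eq_sum_descFactorial (x : ℕ) :
    x ^ 4 = x.descFactorial 1 + 7 * x.descFactorial 2 + 6 * x.descFactorial 3 +
      x.descFactorial 4 := by
  rcases x with _ | _ | _ | _ | x <;> simp [Nat.descFactorial_succ]; ring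

theorem Finset.powersetCard_filter {α : Type*} (s : Finset α) (p : α → Prop) [DecidablePred p]
    (k : ℕ) :
    powersetCard k (s.filter p) = (powersetCard k s).filter fun T => ∀ j ∈ T, p j := by
  ext T
  simp only [Finset.mem_powersetCard, Finset.mem_filter, Finset.subset_iff]
  grind

theorem ProbabilityTheory.iIndepFun.iIndepSet_preimage {Ω ι β : Type*} [MeasurableSpace Ω]
    [MeasurableSpace β] {μ : Measure Ω} {f : ι → Ω → β} (hf : iIndepFun f μ)
    (hfm : ∀ i, Measurable (f i)) {S : ι → Set β} (hS : ∀ i, MeasurableSet (S i)) :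
    iIndepSet (fun i => f i ⁻¹' S i) μ :=
  (iIndepSet_iff_meas_biInter fun i => hfm i (hS i)).2 fun _ =>
    hf.meas_biInter fun i _ => ⟨S i, hS i, rfl⟩

theorem measure_preimage_eq_ofReal_tsum_indicator {Ω : Type*} [MeasurableSpace Ω]
    {μ : Measure Ω} {X : Ω → ℕ} (hX : Measurable X) {p : ℕ → ℝ} (hp : ∀ k, 0 ≤ p k)
    (hps : Summable p) (hXp : ∀ k, μ {ω | X ω = k} = ENNReal.ofReal (p k)) (S : Set ℕ) :
    μ (X ⁻¹' S) = ENNReal.ofReal (∑' k, S.indicator p k) := by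
  rw [← tsum_measure_preimage_singleton S.to_countable fun k _ => hX (measurableSet_singleton k),
    ← tsum_subtype, ENNReal.ofReal_tsum_of_nonneg (fun k : S => hp k) (hps.subtype S)]
  exact tsum_congr fun k => hXp k

section numOccurring

variable {Ω ι : Type*} {A : ι → Set Ω}

noncomputable def numOccurring (A : ι → Set Ω) (s : Finset ι) (ω : Ω) : ℕ :=
  ∑ j ∈ s, (A j).indicator 1 ω

theorem numOccurring_eq_card_filter (s : Finset ι) (ω : Ω) [DecidablePred (ω ∈ A ·)] :
    numOccurring A s ω = #{j ∈ s | ω ∈ A j} := by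
  simp [numOccurring, Set.indicator_apply]

theorem choose_numOccurring_eq_sum_indicator (s : Finset ι) (k : ℕ) (ω : Ω) :
    ((numOccurring A s ω).choose k : ℝ≥0∞) =
      ∑ T ∈ powersetCard k s, (⋂ j ∈ T, A j).indicator 1 ω := by
  classical
  rw [numOccurring_eq_card_filter, ← Finset.card_powersetCard, Finset.powersetCard_filter,
    Finset.card_filter, Nat.cast_sum]
  refine Finset.sum_congr rfl fun T _ => ?_
  simp [Set.indicator_apply]

theorem tsum_occupied_le_numOccurring {κ : Type*} [DecidableEq κ] (B : ι → Ω → κ)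
    (s : Finset ι) (P : κ → Prop) [DecidablePred P] (ω : Ω) :
    ∑' k, (if 1 ≤ #{j ∈ s | B j ω = k} ∧ P k then (1 : ℝ) else 0) ≤
      numOccurring (fun j => B j ⁻¹' {k | P k}) s ω := by
  set F := Finset.image (B · ω) {j ∈ s | P (B j ω)}
  have hF (k : κ) : (1 ≤ #{j ∈ s | B j ω = k} ∧ P k) ↔ k ∈ F := by
    simp only [F, Finset.one_le_card, Finset.filter_nonempty_iff, Finset.mem_image,
      Finset.mem_filter]
    grind
  calc ∑' k, (if 1 ≤ #{j ∈ s | B j ω = k} ∧ P k then (1 : ℝ) else 0) = #F := by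
        simp_rw [hF]
        rw [tsum_eq_sum (s := F) fun k hk => if_neg hk, Finset.sum_boole,
          Finset.filter_mem_eq_inter, Finset.inter_self]
    _ ≤ #{j ∈ s | P (B j ω)} := by exact_mod_cast Finset.card_image_le
    _ = numOccurring (fun j => B j ⁻¹' {k | P k}) s ω := by
        simp [numOccurring, Set.indicator_apply]

variable [MeasurableSpace Ω] {μ : Measure Ω} {Q : ℝ≥0∞}

theorem measurable_numOccurring (hA : ∀ j, MeasurableSet (A j)) (s : Finset ι) :
    Measurable (numOccurring A s) :=
  Finset.measurable_sum _ fun j _ => measurable_const.indicator (hA j)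

theorem lintegral_choose_numOccurring (hA : ∀ j, MeasurableSet (A j)) (hind : iIndepSet A μ)
    (hQ : ∀ j, μ (A j) = Q) (s : Finset ι) (k : ℕ) :
    ∫⁻ ω, ((numOccurring A s ω).choose k : ℝ≥0∞) ∂μ = (#s).choose k * Q ^ k := by
  have hT : ∀ T ∈ powersetCard k s, MeasurableSet (⋂ j ∈ T, A j) :=
    fun T _ => Finset.measurableSet_biInter T fun j _ => hA j
  simp_rw [choose_numOccurring_eq_sum_indicator]
  rw [lintegral_finsetSum _ fun T hTs => measurable_one.indicator (hT T hTs)]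
  calc ∑ T ∈ powersetCard k s, ∫⁻ ω, (⋂ j ∈ T, A j).indicator 1 ω ∂μ
      = ∑ T ∈ powersetCard k s, Q ^ k := Finset.sum_congr rfl fun T hTs => by
        rw [lintegral_indicator_one (hT T hTs), hind.meas_biInter,
          Finset.prod_congr rfl fun j _ => hQ j, Finset.prod_const,
          (Finset.mem_powersetCard.1 hTs).2]
    _ = (#s).choose k * Q ^ k := by
        rw [Finset.sum_const, Finset.card_powersetCard, nsmul_eq_mul]

theorem lintegral_descFactorial_numOccurring (hA : ∀ j, MeasurableSet (A j))
    (hind : iIndepSet A μ) (hQ : ∀ j, μ (A j) = Q) (s : Finset ι) (k : ℕ) :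
    ∫⁻ ω, ((numOccurring A s ω).descFactorial k : ℝ≥0∞) ∂μ = (#s).descFactorial k * Q ^ k := by
  simp_rw [Nat.descFactorial_eq_factorial_mul_choose, Nat.cast_mul]
  rw [lintegral_const_mul' _ _ (ENNReal.natCast_ne_top _),
    lintegral_choose_numOccurring hA hind hQ, mul_assoc]

theorem lintegral_numOccurring_pow_four_le (hA : ∀ j, MeasurableSet (A j))
    (hind : iIndepSet A μ) (hQ : ∀ j, μ (A j) = Q) (s : Finset ι) :
    ∫⁻ ω, (numOccurring A s ω : ℝ≥0∞) ^ 4 ∂μ ≤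
      #s * Q + 7 * (#s * Q) ^ 2 + 6 * (#s * Q) ^ 3 + (#s * Q) ^ 4 := by
  have hmeas (k : ℕ) : Measurable fun ω => ((numOccurring A s ω).descFactorial k : ℝ≥0∞) :=
    (measurable_from_nat (f := fun m : ℕ => (m.descFactorial k : ℝ≥0∞))).comp
      (measurable_numOccurring hA s)
  have hfactorial_moment_le (k : ℕ) : ((#s).descFactorial k : ℝ≥0∞) * Q ^ k ≤ (#s * Q) ^ k := by
    rw [mul_pow]
    gcongr
    exact_mod_cast Nat.descFactorial_le_pow _ _
  simp_rw [← Nat.cast_pow, Nat.pow_four_eq_sum_descFactorial, Nat.cast_add, Nat.cast_mul]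
  rw [lintegral_add_right _ (hmeas 4), lintegral_add_right _ ((hmeas 3).const_mul _),
    lintegral_add_right _ ((hmeas 2).const_mul _), lintegral_const_mul _ (hmeas 2),
    lintegral_const_mul _ (hmeas 3)]
  simp only [lintegral_descFactorial_numOccurring hA hind hQ, Nat.cast_ofNat]
  gcongr ?_ + 7 * ?_ + 6 * ?_ + ?_
  · simp
  · exact hfactorial_moment_le 2
  · exact hfactorial_moment_le 3
  · exact hfactorial_moment_le 4

end numOccurring

theorem fourth_moment_occupied_small_boxes_general
    {Ω : Type*} [MeasureSpace Ω]
    (p : ℕ → ℝ) (hp : ∀ k, 0 ≤ p k) (hp1 : HasSum p 1)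
    (B : ℕ → Ω → ℕ) (hBmeas : ∀ j, Measurable (B j))
    (hBindep : iIndepFun B volume)
    (hBdist : ∀ j k, volume {ω | B j ω = k} = ENNReal.ofReal (p k))
    (Z : ℕ → ℕ → Ω → ℕ)
    (hZ : ∀ n k ω, Z n k ω = ((Finset.range n).filter (fun j => B j ω = k)).card)
    (Δ : ℕ → ℝ)
    (hΔ : ∀ n, Δ n = n * ∑' k : ℕ, (if n * p k < 1 then p k else 0))
    (n : ℕ) :
    ∫⁻ ω, ENNReal.ofReal
        ((∑' k : ℕ, (if 1 ≤ Z n k ω ∧ n * p k < 1 then (1 : ℝ) else 0)) ^ 4) ∂volume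
      ≤ ENNReal.ofReal (Δ n + 7 * Δ n ^ 2 + 6 * Δ n ^ 3 + Δ n ^ 4) := by
  set S : Set ℕ := {k | (n : ℝ) * p k < 1}
  have hS : MeasurableSet S := S.to_countable.measurableSet
  have hΔq : Δ n = n * ∑' k, S.indicator p k := by simp [hΔ n, S, Set.indicator_apply]
  have hq0 : 0 ≤ ∑' k, S.indicator p k := tsum_nonneg (Set.indicator_nonneg fun k _ => hp k)
  calc _ ≤ ∫⁻ ω, (numOccurring (fun j => B j ⁻¹' S) (Finset.range n) ω : ℝ≥0∞) ^ 4 :=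
        lintegral_mono fun ω => by
          rw [ENNReal.ofReal_pow (tsum_nonneg fun k => by positivity), ← ENNReal.ofReal_natCast]
          gcongr
          simp_rw [hZ]
          exact tsum_occupied_le_numOccurring B _ _ ω
    _ ≤ _ := lintegral_numOccurring_pow_four_le (fun j => hBmeas j hS)
          (hBindep.iIndepSet_preimage hBmeas fun _ => hS)
          (fun j => measure_preimage_eq_ofReal_tsum_indicator (hBmeas j) hp hp1.summable
            (hBdist j) S) _
    _ = _ := by
        rw [Finset.card_range, hΔq]
        lift ∑' k, S.indicator p k to ℝ≥0 using hq0 with q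
        simp only [ENNReal.ofReal_coe_nnreal]
        norm_cast
        rw [ENNReal.ofReal_coe_nnreal]

/-- In the infinite occupancy scheme with deterministic probabilities `(p k)`,
for every `n`,
`𝔼 (∑_k 1{Z n k ≥ 1} 1{n p k < 1})⁴ ≤ Δ n + 7 Δ n ² + 6 Δ n ³ + Δ n ⁴`,
where `Δ n = n ∑_k p k 1{n p k < 1}`. -/
theorem fourth_moment_occupied_small_boxes
    {Ω : Type*} [MeasureSpace Ω] [IsProbabilityMeasure (volume : Measure Ω)]
    (p : ℕ → ℝ) (hp : ∀ k, 0 ≤ p k) (hp1 : HasSum p 1)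
    (B : ℕ → Ω → ℕ) (hBmeas : ∀ j, Measurable (B j))
    (hBindep : iIndepFun B volume)
    (hBdist : ∀ j k, volume {ω | B j ω = k} = ENNReal.ofReal (p k))
    (Z : ℕ → ℕ → Ω → ℕ)
    (hZ : ∀ n k ω, Z n k ω = ((Finset.range n).filter (fun j => B j ω = k)).card)
    (Δ : ℕ → ℝ)
    (hΔ : ∀ n, Δ n = n * ∑' k : ℕ, (if n * p k < 1 then p k else 0))
    (n : ℕ) :
    ∫⁻ ω, ENNReal.ofReal
        ((∑' k : ℕ, (if 1 ≤ Z n k ω ∧ n * p k < 1 then (1 : ℝ) else 0)) ^ 4) ∂volume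
      ≤ ENNReal.ofReal (Δ n + 7 * Δ n ^ 2 + 6 * Δ n ^ 3 + Δ n ^ 4) :=
  fourth_moment_occupied_small_boxes_general p hp hp1 B hBmeas hBindep hBdist Z hZ Δ hΔ n
end

section
/- Let G : [0, ∞) → [0, ∞) be a locally bounded function. Then, for any l ∈ ℕ and any t ≥ 0, E ( Σ_{k≥0} G(t − S_k) 1{S_k ≤ t} )^l ≤ ( Σ_{j=0}^{⌊t⌋} sup_{y ∈ [j, j+1)} G(y) )^l · E (ν(1))^l. -/
open MeasureTheory ProbabilityTheory Filter Set

open scoped ENNReal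

/-!
Let `cⱼ` be the supremum of `G` on `[j, j + 1)` and `Nⱼ` the number of renewals in
`(t - j - 1, t - j]`. Pathwise the shot noise is at most `∑ⱼ cⱼ Nⱼ`, and Hölder's inequality gives
`𝔼 (∑ⱼ cⱼ Nⱼ)ˡ ≤ (∑ⱼ cⱼ)ˡ · maxⱼ 𝔼 Nⱼˡ`. A unit interval `(s, s + 1]` holds at most as many
renewals as `[S_τ, S_τ + 1]`, where `τ` is the first passage time above `s`; the walk restarted at
`τ` is independent of the past up to `τ` and has the law of the original walk, so `𝔼 Nⱼˡ ≤ 𝔼 ν(1)ˡ`.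
Positive i.i.d. increments make the walk transient, so `ν(1)` is a.s. finite and the extended-real
count agrees with the real-valued one.
-/

/-- The paper's `ν y` is `renewalCount ξ (Iic y)`; unlike a real `tsum`, the count is `∞` rather
than `0` when infinitely many partial sums lie in `B`. -/
noncomputable def renewalCount (x : ℕ → ℝ) (B : Set ℝ) : ℝ≥0∞ :=
  ∑' k, B.indicator 1 (∑ i ∈ Finset.range k, x i)

lemma measurable_renewalCount {B : Set ℝ} (hB : MeasurableSet B) :
    Measurable fun x : ℕ → ℝ => renewalCount x B :=
  Measurable.tsum fun _ =>
    (measurable_one.indicator hB).comp (Finset.measurable_sum _ fun i _ => measurable_pi_apply i)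

lemma renewalCount_Iic_eq_ofReal {x : ℕ → ℝ}
    (hx : Tendsto (fun n => ∑ i ∈ Finset.range n, x i) atTop atTop) (y : ℝ) :
    renewalCount x (Iic y)
      = ENNReal.ofReal (∑' k, if ∑ i ∈ Finset.range k, x i ≤ y then (1 : ℝ) else 0) := by
  obtain ⟨K, hK⟩ := eventually_atTop.1 (hx.eventually_gt_atTop y)
  have hsum : Summable fun k => if ∑ i ∈ Finset.range k, x i ≤ y then (1 : ℝ) else 0 :=
    summable_of_ne_finset_zero (s := Finset.range K) fun k hk =>
      if_neg (not_le.2 (hK k (by simpa using hk)))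
  rw [ENNReal.ofReal_tsum_of_nonneg (fun k => by split_ifs <;> norm_num) hsum, renewalCount]
  congr with k
  by_cases hk : ∑ i ∈ Finset.range k, x i ≤ y <;> simp [hk]

def IsFirstPassage (x : ℕ → ℝ) (s : ℝ) (m : ℕ) : Prop :=
  s < ∑ i ∈ Finset.range m, x i ∧ ∀ r < m, ∑ i ∈ Finset.range r, x i ≤ s

namespace IsFirstPassage

variable {x : ℕ → ℝ} {s : ℝ} {m : ℕ}

lemma exists_of_lt (h : ∃ m, s < ∑ i ∈ Finset.range m, x i) : ∃ m, IsFirstPassage x s m :=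
  ⟨Nat.find h, Nat.find_spec h, fun _ hr => not_lt.1 (Nat.find_min h hr)⟩

lemma unique {m' : ℕ} (hm : IsFirstPassage x s m) (hm' : IsFirstPassage x s m') : m = m' := by
  by_contra hne
  rcases Nat.lt_or_gt_of_ne hne with hlt | hlt
  · exact (hm'.2 m hlt).not_gt hm.1
  · exact (hm.2 m' hlt).not_gt hm'.1

/-- After the first passage above `s`, every visit to `(s, s + h]` is a visit of the restarted
walk to `(-∞, h]`. -/
lemma renewalCount_Ioc_le (hm : IsFirstPassage x s m) (h : ℝ) :
    renewalCount x (Ioc s (s + h)) ≤ renewalCount (fun i => x (m + i)) (Iic h) := by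
  unfold renewalCount
  rw [← ENNReal.summable.sum_add_tsum_nat_add' (k := m)]
  have hbefore : ∑ r ∈ Finset.range m, (Ioc s (s + h)).indicator 1
      (∑ i ∈ Finset.range r, x i) = (0 : ℝ≥0∞) :=
    Finset.sum_eq_zero fun r hr => indicator_of_notMem
      (fun hmem => (hm.2 r (Finset.mem_range.1 hr)).not_gt hmem.1) _
  rw [hbefore, zero_add]
  refine ENNReal.tsum_le_tsum fun k => ?_
  by_cases hk : ∑ i ∈ Finset.range (k + m), x i ∈ Ioc s (s + h)
  · have hshift : ∑ i ∈ Finset.range k, x (m + i) ∈ Iic h := by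
      rw [Nat.add_comm k m, Finset.sum_range_add] at hk
      simp only [mem_Ioc, mem_Iic] at hk ⊢
      linarith [hm.1]
    simp [indicator_of_mem hk, indicator_of_mem hshift]
  · simp [indicator_of_notMem hk]

end IsFirstPassage

/-- Weighted Hölder inequality with exponent `n`. -/
lemma ENNReal.pow_sum_mul_le {ι : Type*} (s : Finset ι) (w f : ι → ℝ≥0∞) {n : ℕ} (hn : n ≠ 0) :
    (∑ i ∈ s, w i * f i) ^ n ≤ (∑ i ∈ s, w i) ^ (n - 1) * ∑ i ∈ s, w i * f i ^ n := by
  have hn' : (1 : ℝ) ≤ n := Nat.one_le_cast.2 (Nat.one_le_iff_ne_zero.2 hn)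
  have hn0 : (n : ℝ) ≠ 0 := by positivity
  calc (∑ i ∈ s, w i * f i) ^ n
      ≤ ((∑ i ∈ s, w i) ^ (1 - (n : ℝ)⁻¹) * (∑ i ∈ s, w i * f i ^ (n : ℝ)) ^ (n : ℝ)⁻¹) ^ n :=
        pow_le_pow_left' (ENNReal.inner_le_weight_mul_Lp_of_nonneg s hn' w f) n
    _ = (∑ i ∈ s, w i) ^ (n - 1) * ∑ i ∈ s, w i * f i ^ n := by
        rw [mul_pow, ← ENNReal.rpow_mul_natCast, ← ENNReal.rpow_mul_natCast, sub_mul,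
          inv_mul_cancel₀ hn0, one_mul, ← Nat.cast_pred (Nat.pos_of_ne_zero hn),
          ENNReal.rpow_one, ENNReal.rpow_natCast]
        simp only [ENNReal.rpow_natCast]

lemma lintegral_sum_mul_pow_le {Ω ι : Type*} [MeasurableSpace Ω] {μ : Measure Ω}
    (J : Finset ι) (c : ι → ℝ≥0∞) {N : ι → Ω → ℝ≥0∞} (hN : ∀ j, Measurable (N j)) {n : ℕ}
    (hn : n ≠ 0) {M : ℝ≥0∞} (hM : ∀ j ∈ J, ∫⁻ ω, N j ω ^ n ∂μ ≤ M) :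
    ∫⁻ ω, (∑ j ∈ J, c j * N j ω) ^ n ∂μ ≤ (∑ j ∈ J, c j) ^ n * M := by
  calc ∫⁻ ω, (∑ j ∈ J, c j * N j ω) ^ n ∂μ
      ≤ ∫⁻ ω, (∑ j ∈ J, c j) ^ (n - 1) * ∑ j ∈ J, c j * N j ω ^ n ∂μ :=
        lintegral_mono fun ω => ENNReal.pow_sum_mul_le J c (N · ω) hn
    _ = (∑ j ∈ J, c j) ^ (n - 1) * ∑ j ∈ J, c j * ∫⁻ ω, N j ω ^ n ∂μ := by
        rw [lintegral_const_mul _ (by fun_prop), lintegral_finsetSum _ (by fun_prop)]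
        simp_rw [lintegral_const_mul _ ((hN _).pow_const n)]
    _ ≤ (∑ j ∈ J, c j) ^ (n - 1) * ∑ j ∈ J, c j * M := by gcongr with j hj; exact hM j hj
    _ = (∑ j ∈ J, c j) ^ n * M := by
        rw [← Finset.sum_mul, ← mul_assoc, ← pow_succ,
          Nat.sub_add_cancel (Nat.one_le_iff_ne_zero.2 hn)]

lemma ENNReal.ofReal_tsum_le {ι : Type*} {f : ι → ℝ} (hf : ∀ i, 0 ≤ f i) :
    ENNReal.ofReal (∑' i, f i) ≤ ∑' i, ENNReal.ofReal (f i) := by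
  by_cases h : Summable f
  · exact (ENNReal.ofReal_tsum_of_nonneg hf h).le
  · simp [tsum_eq_zero_of_not_summable h]

section ShotNoise

variable {G : ℝ → ℝ} {t : ℝ}

lemma bddAbove_image_Ico_nat (hG : ∀ r, BddAbove (G '' Icc 0 r)) (j : ℕ) :
    BddAbove (G '' Ico (j : ℝ) (j + 1)) :=
  (hG (j + 1)).mono (image_mono (Ico_subset_Icc_self.trans (Icc_subset_Icc_left j.cast_nonneg)))

lemma sSup_image_Ico_nat_nonneg (hG₀ : ∀ y, 0 ≤ y → 0 ≤ G y)
    (hG : ∀ r, BddAbove (G '' Icc 0 r)) (j : ℕ) : 0 ≤ sSup (G '' Ico (j : ℝ) (j + 1)) :=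
  (hG₀ j j.cast_nonneg).trans
    (le_csSup (bddAbove_image_Ico_nat hG j) ⟨j, ⟨le_rfl, lt_add_one _⟩, rfl⟩)

lemma shot_nonneg (hG₀ : ∀ y, 0 ≤ y → 0 ≤ G y) (u : ℝ) :
    0 ≤ if u ≤ t then G (t - u) else 0 := by
  split_ifs with hut
  exacts [hG₀ _ (sub_nonneg.2 hut), le_rfl]

/-- A shot at time `u` contributes at most the supremum of `G` over the unit interval containing
the elapsed time `t - u`. -/
lemma ofReal_shot_le_sum (hG : ∀ r, BddAbove (G '' Icc 0 r)) {u : ℝ} (hu : 0 ≤ u) :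
    ENNReal.ofReal (if u ≤ t then G (t - u) else 0)
      ≤ ∑ j ∈ Finset.range (⌊t⌋₊ + 1), ENNReal.ofReal (sSup (G '' Ico (j : ℝ) (j + 1)))
          * (Ioc (t - (j + 1)) (t - (j + 1) + 1)).indicator 1 u := by
  split_ifs with hut
  swap
  · simp
  set j := ⌊t - u⌋₊
  have hj : (j : ℝ) ≤ t - u ∧ t - u < j + 1 :=
    ⟨Nat.floor_le (sub_nonneg.2 hut), Nat.lt_floor_add_one _⟩
  have hjJ : j ∈ Finset.range (⌊t⌋₊ + 1) :=
    Finset.mem_range.2 (Nat.lt_succ_of_le (Nat.floor_mono (by linarith)))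
  have hu_mem : u ∈ Ioc (t - (j + 1)) (t - (j + 1) + 1) := ⟨by linarith, by linarith⟩
  refine le_trans ?_ (Finset.single_le_sum (fun _ _ => zero_le) hjJ)
  rw [indicator_of_mem hu_mem, Pi.one_apply, mul_one]
  exact ENNReal.ofReal_le_ofReal (le_csSup (bddAbove_image_Ico_nat hG j) ⟨t - u, hj, rfl⟩)

lemma ofReal_tsum_shot_le (hG₀ : ∀ y, 0 ≤ y → 0 ≤ G y) (hG : ∀ r, BddAbove (G '' Icc 0 r))
    {x : ℕ → ℝ} (hx : ∀ i, 0 ≤ x i) :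
    ENNReal.ofReal (∑' k, if ∑ i ∈ Finset.range k, x i ≤ t
        then G (t - ∑ i ∈ Finset.range k, x i) else 0)
      ≤ ∑ j ∈ Finset.range (⌊t⌋₊ + 1), ENNReal.ofReal (sSup (G '' Ico (j : ℝ) (j + 1)))
          * renewalCount x (Ioc (t - (j + 1)) (t - (j + 1) + 1)) := by
  have hS k : 0 ≤ ∑ i ∈ Finset.range k, x i := Finset.sum_nonneg fun i _ => hx i
  calc _ ≤ ∑' k, ENNReal.ofReal (if ∑ i ∈ Finset.range k, x i ≤ t
          then G (t - ∑ i ∈ Finset.range k, x i) else 0) :=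
        ENNReal.ofReal_tsum_le fun _ => shot_nonneg hG₀ _
    _ ≤ ∑' k, ∑ j ∈ Finset.range (⌊t⌋₊ + 1), ENNReal.ofReal (sSup (G '' Ico (j : ℝ) (j + 1)))
          * (Ioc (t - (j + 1)) (t - (j + 1) + 1)).indicator 1 (∑ i ∈ Finset.range k, x i) :=
        ENNReal.tsum_le_tsum fun k => ofReal_shot_le_sum hG (hS k)
    _ = _ := by
        rw [Summable.tsum_finsetSum fun _ _ => ENNReal.summable]
        simp_rw [ENNReal.tsum_mul_left, renewalCount]

end ShotNoise

namespace ProbabilityTheory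

variable {Ω : Type*} {ξ : ℕ → Ω → ℝ}

abbrev pastSigma (ξ : ℕ → Ω → ℝ) (m : ℕ) : MeasurableSpace Ω :=
  ⨆ i ∈ Iio m, MeasurableSpace.comap (ξ i) inferInstance

lemma measurable_pastSigma_sum {m r : ℕ} (hr : r ≤ m) :
    Measurable[pastSigma ξ m] fun ω => ∑ i ∈ Finset.range r, ξ i ω :=
  Finset.measurable_sum _ fun i hi => (comap_measurable (ξ i)).mono
    (le_iSup₂ (f := fun j (_ : j ∈ Iio m) => MeasurableSpace.comap (ξ j) inferInstance) i
      (by simp only [mem_Iio]; exact lt_of_lt_of_le (Finset.mem_range.1 hi) hr)) le_rfl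

lemma measurableSet_pastSigma_isFirstPassage (s : ℝ) (m : ℕ) :
    MeasurableSet[pastSigma ξ m] {ω | IsFirstPassage (fun i => ξ i ω) s m} := by
  simp only [IsFirstPassage, ofPred_and, ofPred_forall]
  exact (measurableSet_lt measurable_const (measurable_pastSigma_sum le_rfl)).inter
    (MeasurableSet.iInter fun r => MeasurableSet.iInter fun hr =>
      measurableSet_le (measurable_pastSigma_sum hr.le) measurable_const)

variable [MeasurableSpace Ω] {μ : Measure Ω}

lemma iIndepFun.map_shift_eq (hξ : ∀ k, Measurable (ξ k)) (hindep : iIndepFun ξ μ)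
    (hid : ∀ k, IdentDistrib (ξ k) (ξ 0) μ μ) (m : ℕ) :
    μ.map (fun ω i => ξ (m + i) ω) = μ.map (fun ω i => ξ i ω) := by
  rw [(hindep.precomp (add_right_injective m)).map_fun_eq_infinitePi_map (fun i => hξ _),
    hindep.map_fun_eq_infinitePi_map hξ]
  congr with i : 1
  rw [(hid _).map_eq, (hid i).map_eq]

lemma iIndepFun.indep_pastSigma_comap_shift (hξ : ∀ k, Measurable (ξ k))
    (hindep : iIndepFun ξ μ) (m : ℕ) :
    Indep (pastSigma ξ m) (MeasurableSpace.comap (fun ω i => ξ (m + i) ω) inferInstance) μ := by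
  have hfuture : MeasurableSpace.comap (fun ω i => ξ (m + i) ω) inferInstance
      ≤ ⨆ j ∈ Ici m, MeasurableSpace.comap (ξ j) inferInstance := by
    simp_rw [MeasurableSpace.pi, MeasurableSpace.comap_iSup, MeasurableSpace.comap_comp]
    exact iSup_le fun i => le_iSup₂
      (f := fun j (_ : j ∈ Ici m) => MeasurableSpace.comap (ξ j) inferInstance) (m + i) (by simp)
  exact indep_of_indep_of_le_right (indep_iSup_of_disjoint (fun i => (hξ i).comap_le)
    ((iIndepFun_iff_iIndep _ _ _).1 hindep) (Iio_disjoint_Ici le_rfl)) hfuture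

lemma pastSigma_le (hξ : ∀ k, Measurable (ξ k)) (m : ℕ) : pastSigma ξ m ≤ ‹MeasurableSpace Ω› :=
  iSup₂_le fun i _ => (hξ i).comap_le

/-- The Markov property of the walk at the deterministic time `m`. -/
lemma iIndepFun.lintegral_indicator_comp_shift (hξ : ∀ k, Measurable (ξ k))
    (hindep : iIndepFun ξ μ) (hid : ∀ k, IdentDistrib (ξ k) (ξ 0) μ μ) {m : ℕ} {A : Set Ω}
    (hA : MeasurableSet[pastSigma ξ m] A) {Φ : (ℕ → ℝ) → ℝ≥0∞} (hΦ : Measurable Φ) :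
    ∫⁻ ω, A.indicator (fun ω => Φ fun i => ξ (m + i) ω) ω ∂μ
      = μ A * ∫⁻ ω, Φ (fun i => ξ i ω) ∂μ := by
  have hshift : Measurable fun ω i => ξ (m + i) ω := measurable_pi_lambda _ fun i => hξ _
  calc ∫⁻ ω, A.indicator (fun ω => Φ fun i => ξ (m + i) ω) ω ∂μ
      = ∫⁻ ω, A.indicator 1 ω * Φ (fun i => ξ (m + i) ω) ∂μ := by
        congr with ω
        by_cases hω : ω ∈ A <;> simp [hω]
    _ = μ A * ∫⁻ ω, Φ (fun i => ξ (m + i) ω) ∂μ := by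
        rw [lintegral_mul_eq_lintegral_mul_lintegral_of_independent_measurableSpace
          (f := A.indicator 1) (g := fun ω => Φ fun i => ξ (m + i) ω)
          (pastSigma_le hξ m) hshift.comap_le (hindep.indep_pastSigma_comap_shift hξ m)
          ((measurable_const (a := (1 : ℝ≥0∞))).indicator hA :
            Measurable[pastSigma ξ m] (A.indicator 1)) (hΦ.comp (comap_measurable _)),
          lintegral_indicator_one (pastSigma_le hξ m _ hA)]
    _ = μ A * ∫⁻ ω, Φ (fun i => ξ i ω) ∂μ := by
        rw [← lintegral_map hΦ hshift, hindep.map_shift_eq hξ hid m,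
          lintegral_map hΦ (measurable_pi_lambda _ hξ)]

theorem iIndepFun.lintegral_comp_renewalCount_Ioc_le (hξ : ∀ k, Measurable (ξ k))
    (hindep : iIndepFun ξ μ) (hid : ∀ k, IdentDistrib (ξ k) (ξ 0) μ μ)
    {f : ℝ≥0∞ → ℝ≥0∞} (hf : Monotone f) {s : ℝ}
    (hcross : ∀ᵐ ω ∂μ, ∃ m, s < ∑ i ∈ Finset.range m, ξ i ω) (h : ℝ) :
    ∫⁻ ω, f (renewalCount (fun i => ξ i ω) (Ioc s (s + h))) ∂μ
      ≤ ∫⁻ ω, f (renewalCount (fun i => ξ i ω) (Iic h)) ∂μ := by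
  have := hindep.isProbabilityMeasure
  set A : ℕ → Set Ω := fun m => {ω | IsFirstPassage (fun i => ξ i ω) s m}
  set Φ : (ℕ → ℝ) → ℝ≥0∞ := fun x => f (renewalCount x (Iic h))
  have hΦ : Measurable Φ := hf.measurable.comp (measurable_renewalCount measurableSet_Iic)
  have hA m : MeasurableSet (A m) :=
    pastSigma_le hξ m _ (measurableSet_pastSigma_isFirstPassage s m)
  have hdisj : Pairwise (Function.onFun Disjoint A) := fun m m' hne =>
    disjoint_left.2 fun _ hm hm' => hne (IsFirstPassage.unique hm hm')
  calc ∫⁻ ω, f (renewalCount (fun i => ξ i ω) (Ioc s (s + h))) ∂μ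
      ≤ ∫⁻ ω, ∑' m, (A m).indicator (fun ω => Φ fun i => ξ (m + i) ω) ω ∂μ := by
        refine lintegral_mono_ae (hcross.mono fun ω hω => ?_)
        obtain ⟨m, hm⟩ := IsFirstPassage.exists_of_lt hω
        calc _ ≤ Φ fun i => ξ (m + i) ω := hf (hm.renewalCount_Ioc_le h)
          _ = (A m).indicator (fun ω => Φ fun i => ξ (m + i) ω) ω :=
            (indicator_of_mem (s := A m) hm (fun ω => Φ fun i => ξ (m + i) ω)).symm
          _ ≤ _ := ENNReal.le_tsum m
    _ = ∑' m, μ (A m) * ∫⁻ ω, Φ (fun i => ξ i ω) ∂μ := by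
        rw [lintegral_tsum (f := fun m ω => (A m).indicator (fun ω => Φ fun i => ξ (m + i) ω) ω)
          fun m => ((hΦ.comp (measurable_pi_lambda _ fun i => hξ _)).indicator (hA m)).aemeasurable]
        exact tsum_congr fun m => hindep.lintegral_indicator_comp_shift hξ hid
          (measurableSet_pastSigma_isFirstPassage s m) hΦ
    _ = μ (⋃ m, A m) * ∫⁻ ω, Φ (fun i => ξ i ω) ∂μ := by
        rw [ENNReal.tsum_mul_right, measure_iUnion hdisj hA]
    _ ≤ ∫⁻ ω, Φ (fun i => ξ i ω) ∂μ := mul_le_of_le_one_left' prob_le_one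

lemma exists_pos_measure_lt_ne_zero [NeZero μ] {X : Ω → ℝ} (hX : ∀ ω, 0 < X ω) :
    ∃ c > 0, μ {ω | c < X ω} ≠ 0 := by
  by_contra! h
  have hnull : μ (⋃ n : ℕ, {ω | (n + 1 : ℝ)⁻¹ < X ω}) = 0 :=
    measure_iUnion_null fun n => h _ (by positivity)
  rw [iUnion_eq_univ_iff.2 fun ω => exists_nat_one_div_lt (hX ω) |>.imp fun n hn => by
    simpa [one_div] using hn] at hnull
  exact NeZero.ne μ (Measure.measure_univ_eq_zero.1 hnull)

/-- By the second Borel–Cantelli lemma, infinitely many increments exceed some fixed `c > 0`. -/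
theorem iIndepFun.ae_tendsto_sum_range_atTop (hξ : ∀ k, Measurable (ξ k))
    (hindep : iIndepFun ξ μ) (hid : ∀ k, IdentDistrib (ξ k) (ξ 0) μ μ)
    (hpos : ∀ k ω, 0 < ξ k ω) :
    ∀ᵐ ω ∂μ, Tendsto (fun n => ∑ i ∈ Finset.range n, ξ i ω) atTop atTop := by
  have := hindep.isProbabilityMeasure
  obtain ⟨c, hc_pos, hc⟩ := exists_pos_measure_lt_ne_zero (μ := μ) (hpos 0)
  set E : ℕ → Set Ω := fun k => ξ k ⁻¹' Ioi c
  have hE k : MeasurableSet (E k) := hξ k measurableSet_Ioi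
  have hEindep : iIndepSet E μ := (iIndepSet_iff_meas_biInter hE).2 fun F =>
    hindep.meas_biInter fun i _ => ⟨Ioi c, measurableSet_Ioi, rfl⟩
  have hEsum : ∑' k, μ (E k) = ∞ := by
    rw [tsum_congr fun k => (hid k).measure_mem_eq measurableSet_Ioi]
    exact ENNReal.tsum_const_eq_top_of_ne_zero hc
  have hlimsup : ∀ᵐ ω ∂μ, ω ∈ limsup E atTop := by
    rw [ae_iff, ← compl_def, prob_compl_eq_zero_iff (.measurableSet_limsup hE)]
    exact measure_limsup_eq_one hE hEindep hEsum
  filter_upwards [hlimsup] with ω hω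
  refine (not_summable_iff_tendsto_nat_atTop_of_nonneg fun k => (hpos k ω).le).1 fun hsum => ?_
  have hfreq : ∃ᶠ k in atTop, c < ξ k ω := mem_limsup_iff_frequently_mem.1 hω
  exact hfreq (hsum.tendsto_atTop_zero.eventually (gt_mem_nhds hc_pos) |>.mono
    fun _ => not_lt.2 ∘ le_of_lt)

end ProbabilityTheory

theorem renewal_shot_noise_moment_bound_general
    {Ω : Type*} [MeasureSpace Ω] [IsProbabilityMeasure (volume : Measure Ω)]
    (ξ : ℕ → Ω → ℝ)
    (hξmeas : ∀ k, Measurable (ξ k))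
    (hξpos : ∀ k ω, 0 < ξ k ω)
    (hindep : iIndepFun (m := fun _ : ℕ => Real.measurableSpace) ξ volume)
    (hid : ∀ k, IdentDistrib (ξ k) (ξ 0) volume volume)
    (S : ℕ → Ω → ℝ) (hS : ∀ n ω, S n ω = ∑ i ∈ Finset.range n, ξ i ω)
    (ν : ℝ → Ω → ℝ)
    (hν : ∀ x ω, ν x ω = ∑' k : ℕ, (if S k ω ≤ x then (1 : ℝ) else 0))
    (G : ℝ → ℝ)
    (hGnonneg : ∀ y, 0 ≤ y → 0 ≤ G y)
    (hGlocbdd : ∀ r : ℝ, BddAbove (G '' Set.Icc 0 r))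
    (l : ℕ) (t : ℝ) :
    ∫⁻ ω, ENNReal.ofReal
        ((∑' k : ℕ, (if S k ω ≤ t then G (t - S k ω) else 0)) ^ l) ∂volume
      ≤ ENNReal.ofReal ((∑ j ∈ Finset.range (⌊t⌋₊ + 1),
            sSup (G '' Set.Ico (j : ℝ) (j + 1))) ^ l)
          * ∫⁻ ω, ENNReal.ofReal ((ν 1 ω) ^ l) ∂volume := by
  obtain rfl : S = fun n ω => ∑ i ∈ Finset.range n, ξ i ω := funext₂ hS
  beta_reduce at hν ⊢
  rcases eq_or_ne l 0 with rfl | hl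
  · simp
  set J := Finset.range (⌊t⌋₊ + 1)
  set a : ℕ → ℝ := fun j => sSup (G '' Ico (j : ℝ) (j + 1))
  have ha j : 0 ≤ a j := sSup_image_Ico_nat_nonneg hGnonneg hGlocbdd j
  have htrans := hindep.ae_tendsto_sum_range_atTop hξmeas hid hξpos
  have hunit : ∫⁻ ω, renewalCount (fun i => ξ i ω) (Iic 1) ^ l
      = ∫⁻ ω, ENNReal.ofReal (ν 1 ω ^ l) := by
    refine lintegral_congr_ae (htrans.mono fun ω hω => ?_)
    dsimp only
    rw [renewalCount_Iic_eq_ofReal hω, hν,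
      ENNReal.ofReal_pow (tsum_nonneg fun _ => by positivity)]
  calc ∫⁻ ω, ENNReal.ofReal ((∑' k, if ∑ i ∈ Finset.range k, ξ i ω ≤ t
          then G (t - ∑ i ∈ Finset.range k, ξ i ω) else 0) ^ l)
      ≤ ∫⁻ ω, (∑ j ∈ J, ENNReal.ofReal (a j)
          * renewalCount (fun i => ξ i ω) (Ioc (t - (j + 1)) (t - (j + 1) + 1))) ^ l := by
        refine lintegral_mono fun ω => ?_
        rw [ENNReal.ofReal_pow (tsum_nonneg fun _ => shot_nonneg hGnonneg _)]
        exact pow_le_pow_left' (ofReal_tsum_shot_le hGnonneg hGlocbdd fun i => (hξpos i ω).le) l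
    _ ≤ (∑ j ∈ J, ENNReal.ofReal (a j)) ^ l * ∫⁻ ω, renewalCount (fun i => ξ i ω) (Iic 1) ^ l :=
        lintegral_sum_mul_pow_le J _ (fun j => (measurable_renewalCount measurableSet_Ioc).comp
          (measurable_pi_lambda _ hξmeas)) hl fun j _ =>
          hindep.lintegral_comp_renewalCount_Ioc_le hξmeas hid (pow_left_mono l)
            (htrans.mono fun ω hω => (hω.eventually_gt_atTop _).exists) 1
    _ = _ := by
        rw [hunit, ← ENNReal.ofReal_sum_of_nonneg fun j _ => ha j,
          ENNReal.ofReal_pow (Finset.sum_nonneg fun j _ => ha j)]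

/-- **Lemma 2.** Let `(ξ k)` be i.i.d. copies of a positive random variable,
`S n = ξ 0 + … + ξ (n-1)`, and `ν x = #{k ≥ 0 : S k ≤ x}`. If `G : ℝ → ℝ` is nonnegative
and locally bounded on `[0,∞)`, then for any `l` and `t ≥ 0`,
`𝔼 (∑_{k : S k ≤ t} G (t - S k))ˡ ≤ (∑_{j=0}^{⌊t⌋} sup_{y ∈ [j,j+1)} G y)ˡ · 𝔼 (ν 1)ˡ`. -/
theorem renewal_shot_noise_moment_bound
    {Ω : Type*} [MeasureSpace Ω] [IsProbabilityMeasure (volume : Measure Ω)]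
    (ξ : ℕ → Ω → ℝ)
    (hξmeas : ∀ k, Measurable (ξ k))
    (hξpos : ∀ k ω, 0 < ξ k ω)
    (hindep : iIndepFun (m := fun _ : ℕ => Real.measurableSpace) ξ volume)
    (hid : ∀ k, IdentDistrib (ξ k) (ξ 0) volume volume)
    (S : ℕ → Ω → ℝ) (hS : ∀ n ω, S n ω = ∑ i ∈ Finset.range n, ξ i ω)
    (ν : ℝ → Ω → ℝ)
    (hν : ∀ x ω, ν x ω = ∑' k : ℕ, (if S k ω ≤ x then (1 : ℝ) else 0))
    (G : ℝ → ℝ)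
    (hGnonneg : ∀ y, 0 ≤ y → 0 ≤ G y)
    (hGlocbdd : ∀ r : ℝ, BddAbove (G '' Set.Icc 0 r))
    (l : ℕ) (t : ℝ) (ht : 0 ≤ t) :
    ∫⁻ ω, ENNReal.ofReal
        ((∑' k : ℕ, (if S k ω ≤ t then G (t - S k ω) else 0)) ^ l) ∂volume
      ≤ ENNReal.ofReal ((∑ j ∈ Finset.range (⌊t⌋₊ + 1),
            sSup (G '' Set.Ico (j : ℝ) (j + 1))) ^ l)
          * ∫⁻ ω, ENNReal.ofReal ((ν 1 ω) ^ l) ∂volume :=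
  renewal_shot_noise_moment_bound_general ξ hξmeas hξpos hindep hid S hS ν hν G hGnonneg hGlocbdd l
    t
end

section
/- For any c > 0 and any fixed δ > 0, almost surely lim_{n→∞} n^{-c} ( ν(n) − ν(n − δ) ) = 0. -/
/-!
Write `ρ = E[e^{-ξ}] < 1` and `L = -log ρ > 0`. Chernoff's bound gives
`P(ξ_a + ⋯ + ξ_{b-1} ≤ x) ≤ e^x ρ^{b-a}`. Hence, with `K(n) ≈ 2n/L` and `m(n) ≈ 3 log n / L`,
the events "`S_{K(n)} ≤ n`" and "some block of `m(n)` consecutive steps starting before `K(n)`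
sums to at most `δ`" have summable probabilities, so by Borel–Cantelli almost surely neither
occurs for large `n`. Then every renewal epoch in `(n - δ, n]` has index below `K(n)`, and any
two of them are fewer than `m(n)` indices apart, so `ν(n) - ν(n - δ) ≤ m(n) = O(log n)`.
-/

open MeasureTheory ProbabilityTheory Filter Set
open Finset Real Topology

theorem Real.pow_ceil_div_neg_log_le {ρ : ℝ} (hρ0 : 0 < ρ) (hρ1 : ρ < 1) (a : ℝ) :
    ρ ^ ⌈a / -log ρ⌉₊ ≤ exp (-a) := by
  have hL : 0 < -log ρ := neg_pos.2 (log_neg hρ0 hρ1)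
  have ha : a ≤ ⌈a / -log ρ⌉₊ * -log ρ := (div_le_iff₀ hL).1 (Nat.le_ceil _)
  rw [← exp_log hρ0, ← exp_nat_mul, exp_log hρ0]
  exact exp_le_exp.2 (by linarith)

noncomputable def renewalHorizon (ρ : ℝ) (n : ℕ) : ℕ := ⌈2 * n / -log ρ⌉₊

noncomputable def renewalWindow (ρ : ℝ) (n : ℕ) : ℕ := ⌈3 * log n / -log ρ⌉₊

section Asymptotics

variable {ρ : ℝ} (hρ0 : 0 < ρ) (hρ1 : ρ < 1)
include hρ0 hρ1

theorem summable_exp_mul_pow_renewalHorizon :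
    Summable fun n : ℕ => exp n * ρ ^ renewalHorizon ρ n := by
  refine summable_exp_neg_nat.of_nonneg_of_le (fun n => by positivity) fun n => ?_
  calc exp n * ρ ^ renewalHorizon ρ n ≤ exp n * exp (-(2 * n)) := by
        gcongr; exact pow_ceil_div_neg_log_le hρ0 hρ1 _
    _ = exp (-n) := by rw [← exp_add]; ring_nf

theorem summable_renewalHorizon_mul_pow_renewalWindow :
    Summable fun n : ℕ => (renewalHorizon ρ n : ℝ) * ρ ^ renewalWindow ρ n := by
  have hL : 0 < -log ρ := neg_pos.2 (log_neg hρ0 hρ1)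
  refine ((summable_nat_pow_inv.2 one_lt_two).mul_left (2 / -log ρ + 1)).of_nonneg_of_le
    (fun n => by positivity) fun n => ?_
  rcases Nat.eq_zero_or_pos n with rfl | hn
  · simp [renewalHorizon]
  have hn1 : (1 : ℝ) ≤ n := by exact_mod_cast hn
  have hK : (renewalHorizon ρ n : ℝ) ≤ (2 / -log ρ + 1) * n := by
    have := (Nat.ceil_lt_add_one (by positivity : 0 ≤ 2 * (n : ℝ) / -log ρ)).le
    have h2 : 2 * (n : ℝ) / -log ρ = 2 / -log ρ * n := by ring
    rw [renewalHorizon]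
    linarith
  have hW : ρ ^ renewalWindow ρ n ≤ ((n : ℝ) ^ 3)⁻¹ := by
    calc ρ ^ renewalWindow ρ n ≤ exp (-(3 * log n)) := pow_ceil_div_neg_log_le hρ0 hρ1 _
      _ = ((n : ℝ) ^ 3)⁻¹ := by
        rw [exp_neg, show 3 * log n = log ((n : ℝ) ^ 3) by rw [log_pow]; norm_num,
          exp_log (by positivity)]
  calc (renewalHorizon ρ n : ℝ) * ρ ^ renewalWindow ρ n
      ≤ (2 / -log ρ + 1) * n * ((n : ℝ) ^ 3)⁻¹ := by gcongr
    _ = (2 / -log ρ + 1) * ((n : ℝ) ^ 2)⁻¹ := by field_simp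

theorem renewalWindow_le (n : ℕ) :
    (renewalWindow ρ n : ℝ) ≤ 3 / -log ρ * log n + 1 := by
  have hL : 0 < -log ρ := neg_pos.2 (log_neg hρ0 hρ1)
  have := (Nat.ceil_lt_add_one (by positivity : 0 ≤ 3 * log n / -log ρ)).le
  have h3 : 3 * log n / -log ρ = 3 / -log ρ * log n := by ring
  rw [renewalWindow]
  linarith

end Asymptotics

theorem tendsto_rpow_neg_mul_add_log {c : ℝ} (hc : 0 < c) (a b : ℝ) :
    Tendsto (fun n : ℕ => (n : ℝ) ^ (-c) * (a * log n + b)) atTop (𝓝 0) := by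
  have hlog : Tendsto (fun x : ℝ => x ^ (-c) * log x) atTop (𝓝 0) := by
    refine (isLittleO_log_rpow_atTop hc).tendsto_div_nhds_zero.congr' ?_
    filter_upwards [eventually_gt_atTop 0] with x hx
    rw [rpow_neg hx.le, div_eq_inv_mul]
  have := ((hlog.const_mul a).add ((tendsto_rpow_neg_atTop hc).const_mul b)).comp
    tendsto_natCast_atTop_atTop
  simpa [Function.comp_def, mul_add, mul_left_comm, mul_comm] using this

section Counting

variable {s : ℕ → ℝ} (hs : Monotone s) {K m : ℕ} {δ x : ℝ}
include hs

theorem tsum_ite_le_eq_card_filter (hK : x < s K) :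
    ∑' k, (if s k ≤ x then (1 : ℝ) else 0) = #{k ∈ range K | s k ≤ x} := by
  rw [tsum_eq_sum (s := range K) fun k hk => if_neg fun hkx => ?_, sum_boole]
  exact (hK.trans_le (hs (by simpa using hk))).not_ge hkx

theorem card_filter_mem_Ioc_le (hwin : ∀ k < K, s k + δ < s (k + m)) :
    #{k ∈ range K | s k ∈ Ioc (x - δ) x} ≤ m := by
  set F := {k ∈ range K | s k ∈ Ioc (x - δ) x}
  rcases F.eq_empty_or_nonempty with hF | hF
  · simp [hF]
  set a := F.min' hF
  obtain ⟨haK, hax⟩ := mem_filter.1 (F.min'_mem hF)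
  calc #F ≤ #(Ico a (a + m)) := card_le_card fun k hk => ?_
    _ = m := by simp
  have hkx := (mem_filter.1 hk).2
  refine mem_Ico.2 ⟨F.min'_le k hk, not_le.1 fun hak => ?_⟩
  linarith [hwin a (mem_range.1 haK), hs hak, hax.1, hkx.2]

theorem tsum_ite_le_sub_tsum_ite_le_mem_Icc (hδ : 0 ≤ δ) (hK : x < s K)
    (hwin : ∀ k < K, s k + δ < s (k + m)) :
    (∑' k, (if s k ≤ x then (1 : ℝ) else 0)) - ∑' k, (if s k ≤ x - δ then (1 : ℝ) else 0)
      ∈ Icc 0 (m : ℝ) := by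
  have hsplit : #{k ∈ range K | s k ≤ x} =
      #{k ∈ range K | s k ≤ x - δ} + #{k ∈ range K | s k ∈ Ioc (x - δ) x} := by
    rw [← card_union_of_disjoint (disjoint_filter.2 fun k _ h h' => h'.1.not_ge h),
      ← filter_or]
    refine congrArg card (filter_congr fun k _ => ⟨fun h => ?_, ?_⟩)
    · by_cases h' : s k ≤ x - δ
      · exact Or.inl h'
      · exact Or.inr ⟨not_le.1 h', h⟩
    · rintro (h | h)
      · linarith
      · exact h.2
  rw [tsum_ite_le_eq_card_filter hs hK, tsum_ite_le_eq_card_filter hs (by linarith), hsplit]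
  push_cast
  simpa using card_filter_mem_Ioc_le (x := x) hs hwin

end Counting

section Probability

variable {Ω : Type*} [MeasurableSpace Ω] {μ : Measure Ω}

def renewalBadEvent (ξ : ℕ → Ω → ℝ) (K m : ℕ) (x δ : ℝ) : Set Ω :=
  {ω | ∑ i ∈ range K, ξ i ω ≤ x} ∪
    ⋃ k ∈ range K, {ω | ∑ i ∈ range (k + m), ξ i ω ≤ ∑ i ∈ range k, ξ i ω + δ}

theorem MeasureTheory.ae_eventually_notMem_of_summable_measureReal [IsFiniteMeasure μ]
    {s : ℕ → Set Ω} (hs : Summable fun n => μ.real (s n)) :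
    ∀ᵐ ω ∂μ, ∀ᶠ n in atTop, ω ∉ s n :=
  ae_eventually_notMem (by simpa [ofReal_measureReal, measure_ne_top] using hs.tsum_ofReal_ne_top)

theorem ProbabilityTheory.mgf_neg_one_mem_Ioo [IsProbabilityMeasure μ] {X : Ω → ℝ}
    (hX : AEMeasurable X μ) (hpos : ∀ ω, 0 < X ω) : mgf X μ (-1) ∈ Set.Ioo 0 1 := by
  have hlt : ∀ ω, exp (-1 * X ω) < 1 := fun ω => exp_lt_one_iff.2 (by linarith [hpos ω])
  have hint : Integrable (fun ω => exp (-1 * X ω)) μ :=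
    (integrable_const 1).mono' (by fun_prop)
      (ae_of_all _ fun ω => by rw [norm_of_nonneg (exp_nonneg _)]; exact (hlt ω).le)
  refine ⟨mgf_pos hint, ?_⟩
  have hsupp : Function.support (fun ω => 1 - exp (-1 * X ω)) = univ :=
    eq_univ_of_forall fun ω => sub_ne_zero.2 (hlt ω).ne'
  have hgap : 0 < ∫ ω, (1 - exp (-1 * X ω)) ∂μ := by
    rw [integral_pos_iff_support_of_nonneg (fun ω => sub_nonneg.2 (hlt ω).le)
      ((integrable_const 1).sub hint), hsupp]
    simp
  rw [integral_sub (integrable_const 1) hint] at hgap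
  simp only [integral_const, probReal_univ, smul_eq_mul, one_mul] at hgap
  rw [mgf]
  linarith

variable [IsFiniteMeasure μ] {X : Ω → ℝ}

theorem ProbabilityTheory.measureReal_sum_le_le_exp_mul_pow {ι : Type*} {ξ : ι → Ω → ℝ}
    (hmeas : ∀ i, Measurable (ξ i)) (hnonneg : ∀ i ω, 0 ≤ ξ i ω) (hindep : iIndepFun ξ μ)
    (hid : ∀ i, IdentDistrib (ξ i) X μ μ) (s : Finset ι) (x : ℝ) :
    μ.real {ω | ∑ i ∈ s, ξ i ω ≤ x} ≤ exp x * mgf X μ (-1) ^ #s := by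
  have hint : Integrable (fun ω => exp (-1 * (∑ i ∈ s, ξ i) ω)) μ := by
    refine (integrable_const 1).mono' (by fun_prop) (ae_of_all _ fun ω => ?_)
    rw [norm_of_nonneg (exp_nonneg _), exp_le_one_iff, Finset.sum_apply]
    linarith [sum_nonneg fun i (_ : i ∈ s) => hnonneg i ω]
  have hmgf : mgf (∑ i ∈ s, ξ i) μ (-1) = mgf X μ (-1) ^ #s := by
    rw [hindep.mgf_sum hmeas]
    exact prod_eq_pow_card fun i _ => mgf_congr_of_identDistrib _ _ (hid i) _
  simpa [Finset.sum_apply, hmgf] using measure_le_le_exp_mul_mgf x (by norm_num) hint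

theorem ProbabilityTheory.measureReal_renewalBadEvent_le {ξ : ℕ → Ω → ℝ}
    (hmeas : ∀ i, Measurable (ξ i)) (hnonneg : ∀ i ω, 0 ≤ ξ i ω) (hindep : iIndepFun ξ μ)
    (hid : ∀ i, IdentDistrib (ξ i) X μ μ) (K m : ℕ) (x δ : ℝ) :
    μ.real (renewalBadEvent ξ K m x δ) ≤
      exp x * mgf X μ (-1) ^ K + K * (exp δ * mgf X μ (-1) ^ m) := by
  refine (measureReal_union_le _ _).trans (add_le_add ?_ ?_)
  · simpa using measureReal_sum_le_le_exp_mul_pow hmeas hnonneg hindep hid (range K) x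
  refine (measureReal_biUnion_finset_le _ _).trans ?_
  calc ∑ k ∈ range K, μ.real {ω | ∑ i ∈ range (k + m), ξ i ω ≤ ∑ i ∈ range k, ξ i ω + δ}
      ≤ ∑ _k ∈ range K, exp δ * mgf X μ (-1) ^ m := sum_le_sum fun k _ => ?_
    _ = K * (exp δ * mgf X μ (-1) ^ m) := by simp
  simp_rw [← sum_range_add_sum_Ico _ (Nat.le_add_right k m), add_le_add_iff_left]
  simpa using measureReal_sum_le_le_exp_mul_pow hmeas hnonneg hindep hid (Ico k (k + m)) δ

end Probability

/-- **Lemma 4(b).** Let `(ξ k)` be i.i.d. copies of a positive random variable,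
`S n = ξ 0 + … + ξ (n-1)` and `ν x = #{k ≥ 0 : S k ≤ x}`. For any `c > 0` and any fixed
`δ > 0`, almost surely `n^{-c} (ν n - ν (n - δ)) → 0`. -/
theorem renewal_increment_negligible
    {Ω : Type*} [MeasureSpace Ω] [IsProbabilityMeasure (volume : Measure Ω)]
    (ξ : ℕ → Ω → ℝ)
    (hξmeas : ∀ k, Measurable (ξ k))
    (hξpos : ∀ k ω, 0 < ξ k ω)
    (hindep : iIndepFun (m := fun _ : ℕ => Real.measurableSpace) ξ volume)
    (hid : ∀ k, IdentDistrib (ξ k) (ξ 0) volume volume)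
    (S : ℕ → Ω → ℝ) (hS : ∀ n ω, S n ω = ∑ i ∈ Finset.range n, ξ i ω)
    (ν : ℝ → Ω → ℝ)
    (hν : ∀ x ω, ν x ω = ∑' k : ℕ, (if S k ω ≤ x then (1 : ℝ) else 0))
    (c : ℝ) (hc : 0 < c) (δ : ℝ) (hδ : 0 < δ) :
    ∀ᵐ ω ∂(volume : Measure Ω),
      Tendsto (fun n : ℕ => ((n : ℝ) ^ (-c)) * (ν n ω - ν ((n : ℝ) - δ) ω))
        atTop (nhds 0) := by
  obtain rfl : S = fun n ω => ∑ i ∈ range n, ξ i ω := funext₂ hS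
  set ρ := mgf (ξ 0) volume (-1)
  obtain ⟨hρ0, hρ1⟩ := mgf_neg_one_mem_Ioo (μ := volume) (hξmeas 0).aemeasurable (hξpos 0)
  have hnonneg : ∀ k ω, 0 ≤ ξ k ω := fun k ω => (hξpos k ω).le
  have hbad : Summable fun n : ℕ =>
      volume.real (renewalBadEvent ξ (renewalHorizon ρ n) (renewalWindow ρ n) n δ) :=
    ((summable_exp_mul_pow_renewalHorizon hρ0 hρ1).add
      ((summable_renewalHorizon_mul_pow_renewalWindow hρ0 hρ1).mul_left (exp δ))).of_nonneg_of_le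
      (fun _ => measureReal_nonneg) fun n =>
      (measureReal_renewalBadEvent_le hξmeas hnonneg hindep hid _ _ _ _).trans_eq (by ring)
  filter_upwards [ae_eventually_notMem_of_summable_measureReal hbad] with ω hω
  have hmono : Monotone fun k => ∑ i ∈ range k, ξ i ω :=
    monotone_nat_of_le_succ fun k => by rw [sum_range_succ]; linarith [hnonneg k ω]
  have hcount : ∀ᶠ n : ℕ in atTop, ν n ω - ν (n - δ) ω ∈ Icc 0 (renewalWindow ρ n : ℝ) := by
    filter_upwards [hω] with n hn
    simp only [renewalBadEvent, mem_union, mem_ofPred_eq, mem_iUnion, Finset.mem_range, not_or,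
      not_exists, not_le] at hn
    simp only [hν]
    exact tsum_ite_le_sub_tsum_ite_le_mem_Icc hmono hδ.le hn.1 hn.2
  have hpow (n : ℕ) : 0 ≤ (n : ℝ) ^ (-c) := rpow_nonneg n.cast_nonneg _
  refine squeeze_zero' ?_ ?_ (tendsto_rpow_neg_mul_add_log hc (3 / -log ρ) 1)
  · filter_upwards [hcount] with n hn using mul_nonneg (hpow n) hn.1
  · filter_upwards [hcount] with n hn
      using mul_le_mul_of_nonneg_left (hn.2.trans (renewalWindow_le hρ0 hρ1 n)) (hpow n)
end
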